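/- arXiv:1810.09304 — 6 statements merged into one kernel-verified Lean document; each statement's English description precedes it below -/
import Mathlib

section
/- Lemma (ancestor clue, atom version): Let 𝓡 be a ruleset in which every rule body has at most b atoms, and let D be a derivation from a factbase F and 𝓡. Then for every atom A of rank k in D, the number of ancestors of A that belong to F is at most b^k, i.e., |F ∩ Anc(A,D)| ≤ b^k. -/
/-! # A framework for existential rules and the chase

Terms are constants, ordinary variables, or *nulls* (fresh existential variables).
The null `XTerm.null bodyEnc headEnc z key` is the fresh variable `z_{(R,π)}`
canonically determined by the trigger `(R,π)` (encoded by the rule's body and head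
and by the restriction of `π` to the terms of the body) and by the existential
variable `z` of the head. -/

inductive XTerm : Type
  | const : ℕ → XTerm
  | var : ℕ → XTerm
  | null : List (ℕ × List XTerm) → List (ℕ × List XTerm) → XTerm →
      List (XTerm × XTerm) → XTerm

/-- variables (including nulls) are the non-constant terms -/
def XTerm.isVar : XTerm → Prop
  | .const _ => False
  | _ => True

/-- an atom: a predicate together with its list of arguments -/
structure XAtom where
  pred : ℕ
  args : List XTerm

/-- an existential rule, given by its (finite) body and head -/
structure XRule where
  body : List XAtom
  head : List XAtom

/-- a trigger `(R,π)` -/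
structure Trigger where
  rule : XRule
  π : XTerm → XTerm

def applyAtom (σ : XTerm → XTerm) (a : XAtom) : XAtom := ⟨a.pred, a.args.map σ⟩

def applySet (σ : XTerm → XTerm) (S : Set XAtom) : Set XAtom := applyAtom σ '' S

/-- a substitution leaves constants unchanged -/
def constPreserving (σ : XTerm → XTerm) : Prop :=
  ∀ c, σ (XTerm.const c) = XTerm.const c

/-- `σ` is a homomorphism from the set of atoms `A` to the set of atoms `B` -/
def isHom (σ : XTerm → XTerm) (A B : Set XAtom) : Prop :=
  constPreserving σ ∧ applySet σ A ⊆ B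

/-- the variables occurring in a finite set (list) of atoms -/
def listVars (l : List XAtom) : Set XTerm := {t | t.isVar ∧ ∃ a ∈ l, t ∈ a.args}

def XRule.bodySet (R : XRule) : Set XAtom := {a | a ∈ R.body}
def XRule.headSet (R : XRule) : Set XAtom := {a | a ∈ R.head}

/-- the frontier of a rule: the variables shared by its body and head -/
def XRule.frontier (R : XRule) : Set XTerm := listVars R.body ∩ listVars R.head

/-- the existential variables of a rule: variables of the head not in the body -/
def XRule.existVars (R : XRule) : Set XTerm := listVars R.head \ listVars R.body

/-- canonical encoding of the relevant part of a trigger's substitution -/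
def trigKey (R : XRule) (π : XTerm → XTerm) : List (XTerm × XTerm) :=
  (R.body.flatMap XAtom.args).map (fun t => (t, π t))

open Classical in
/-- the safe extension `π^s` of `π`: it maps each existential variable `z` of the
head to the fresh variable `z_{(R,π)}` determined by the trigger, and is `π`
elsewhere -/
noncomputable def safeExt (R : XRule) (π : XTerm → XTerm) : XTerm → XTerm := fun t =>
  if t ∈ R.existVars then
    XTerm.null (R.body.map fun a => (a.pred, a.args))
      (R.head.map fun a => (a.pred, a.args)) t (trigKey R π)
  else π t

/-- two triggers are the same when they have the same rule and their substitutions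
agree on the body (the domain of the substitution of a trigger) -/
def TrigEquiv (T T' : Trigger) : Prop :=
  T.rule = T'.rule ∧ ∀ t ∈ T.rule.body.flatMap XAtom.args, T.π t = T'.π t

/-- A (possibly infinite) derivation `D₀ = (∅,∅,F₀), D₁ = (R₁,π₁,F₁), …` from a
factbase `F` and a ruleset `𝓡`:  `tr i` is the trigger of the element `Dᵢ`
(defined for `1 ≤ i ≤` length) and `facts i` is its factbase `Fᵢ`; each `Fᵢ`
(`i ≥ 1`) is the immediate derivation from `Fᵢ₋₁` through `(Rᵢ,πᵢ)`, and all the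
triggers are pairwise distinct. -/
structure ChaseDerivation (𝓡 : Set XRule) (F : Set XAtom) where
  tr : ℕ → Option Trigger
  facts : ℕ → Set XAtom
  tr_zero : tr 0 = none
  facts_zero : facts 0 = F
  step_some : ∀ i T, tr (i+1) = some T →
    T.rule ∈ 𝓡 ∧ isHom T.π T.rule.bodySet (facts i) ∧
    facts (i+1) = facts i ∪ applySet (safeExt T.rule T.π) T.rule.headSet
  step_none : ∀ i, tr (i+1) = none → facts (i+1) = facts i
  closed : ∀ i, tr (i+2) ≠ none → tr (i+1) ≠ none
  distinct : ∀ i j T T', tr i = some T → tr j = some T' → i ≠ j → ¬ TrigEquiv T T'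

namespace Chase

variable {𝓡 : Set XRule} {F G : Set XAtom}

/-- the set of atoms produced by the `i`-th element of the derivation -/
noncomputable def producedAt (D : ChaseDerivation 𝓡 F) (i : ℕ) : Set XAtom :=
  match D.tr i with
  | some T => applySet (safeExt T.rule T.π) T.rule.headSet
  | none => ∅

def listMax (l : List ℕ) : ℕ := l.foldr max 0

open Classical in
noncomputable def rankStep (D : ChaseDerivation 𝓡 F) (prev : XAtom → ℕ) (A : XAtom) : ℕ :=
  if A ∈ D.facts 0 then 0
  else if h : ∃ i, A ∈ producedAt D i then
    match D.tr (Nat.find h) with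
    | some T => 1 + listMax ((T.rule.body.map (applyAtom T.π)).map prev)
    | none => 0
  else 0

noncomputable def rankFuel (D : ChaseDerivation 𝓡 F) : ℕ → XAtom → ℕ
  | 0 => fun _ => 0
  | n+1 => rankStep D (rankFuel D n)

open Classical in
/-- the index of the first trigger of the derivation producing a given atom -/
noncomputable def firstProd (D : ChaseDerivation 𝓡 F) (A : XAtom) : ℕ :=
  if h : ∃ i, A ∈ producedAt D i then Nat.find h else 0

/-- the rank of an atom in a derivation: `0` for the atoms of `F₀`, and otherwise
`1 +` the maximal rank of the atoms of `π(B)`, where `(R,π)` (with `R = (B,H)`)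
is the first trigger of the derivation such that `A ∈ π^s(H)` -/
noncomputable def rank (D : ChaseDerivation 𝓡 F) (A : XAtom) : ℕ :=
  rankFuel D (firstProd D A + 1) A

/-- the rank of a trigger `(R,π)`: `1 +` the maximal rank of the atoms of `π(B)` -/
noncomputable def trigRank (D : ChaseDerivation 𝓡 F) (T : Trigger) : ℕ :=
  1 + listMax ((T.rule.body.map (applyAtom T.π)).map (rank D))

/-- all atoms appearing in a derivation -/
def allAtoms (D : ChaseDerivation 𝓡 F) : Set XAtom := ⋃ i, D.facts i

/-- the derivation has depth (maximal rank of an atom) at most `k` -/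
def depthAtMost (D : ChaseDerivation 𝓡 F) (k : ℕ) : Prop :=
  ∀ A ∈ allAtoms D, rank D A ≤ k

/-- the derivation has depth at least `k` -/
def depthAtLeast (D : ChaseDerivation 𝓡 F) (k : ℕ) : Prop :=
  ∃ A ∈ allAtoms D, k ≤ rank D A

/-- O-applicability of a trigger on the subderivation `D₀,…,Dᵢ`:
its substitution is a homomorphism from the body to `Fᵢ` -/
def AppO (D : ChaseDerivation 𝓡 F) (i : ℕ) (T : Trigger) : Prop :=
  T.rule ∈ 𝓡 ∧ isHom T.π T.rule.bodySet (D.facts i)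

def frontierAgree (R : XRule) (π π' : XTerm → XTerm) : Prop :=
  ∀ t ∈ R.frontier, π t = π' t

/-- SO-applicability on `D₀,…,Dᵢ`: moreover no trigger of the subderivation has the
same rule with a substitution agreeing on the frontier -/
def AppSO (D : ChaseDerivation 𝓡 F) (i : ℕ) (T : Trigger) : Prop :=
  AppO D i T ∧ ∀ j T', j ≤ i → D.tr j = some T' →
    ¬ (T'.rule = T.rule ∧ frontierAgree T.rule T.π T'.π)

/-- R-applicability on `D₀,…,Dᵢ`: moreover `π` cannot be extended to a homomorphism
from `B ∪ H` to `Fᵢ` -/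
def AppR (D : ChaseDerivation 𝓡 F) (i : ℕ) (T : Trigger) : Prop :=
  AppO D i T ∧ ¬ ∃ σ : XTerm → XTerm,
    isHom σ (T.rule.bodySet ∪ T.rule.headSet) (D.facts i) ∧
    ∀ t ∈ listVars T.rule.body, σ t = T.π t

/-- logical equivalence of two sets of atoms: each maps to the other by homomorphism -/
def logEquiv (A B : Set XAtom) : Prop := (∃ σ, isHom σ A B) ∧ (∃ σ, isHom σ B A)

/-- E-applicability on `D₀,…,Dᵢ`: moreover `Fᵢ ∪ π^s(H)` is not logically
equivalent to `Fᵢ` -/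
def AppE (D : ChaseDerivation 𝓡 F) (i : ℕ) (T : Trigger) : Prop :=
  AppO D i T ∧
  ¬ logEquiv (D.facts i ∪ applySet (safeExt T.rule T.π) T.rule.headSet) (D.facts i)

/-- an O-chase derivation is any derivation -/
def OChase (_D : ChaseDerivation 𝓡 F) : Prop := True

/-- an SO-chase derivation: every trigger is SO-applicable on the preceding
subderivation -/
def SOChase (D : ChaseDerivation 𝓡 F) : Prop := ∀ i T, D.tr (i+1) = some T → AppSO D i T

/-- an R-chase derivation: every trigger is R-applicable on the preceding
subderivation -/
def RChase (D : ChaseDerivation 𝓡 F) : Prop := ∀ i T, D.tr (i+1) = some T → AppR D i T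

/-- rank compatibility: triggers appear in order of non-decreasing rank -/
def RankCompatible (D : ChaseDerivation 𝓡 F) : Prop :=
  ∀ i j T T', D.tr i = some T → D.tr j = some T' → i ≤ j →
    trigRank D T ≤ trigRank D T'

/-- rank exhaustiveness (w.r.t. an applicability criterion `App`): for every rank
`k` of a trigger of the derivation, if `Dᵢ` is the last element whose trigger has
rank `k` then every trigger `App`-applicable on `D₀,…,Dᵢ` has rank `k+1` -/
def RankExhaustive (App : ChaseDerivation 𝓡 F → ℕ → Trigger → Prop)
    (D : ChaseDerivation 𝓡 F) : Prop :=
  ∀ i T, D.tr i = some T →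
    (∀ j T', i < j → D.tr j = some T' → trigRank D T' ≠ trigRank D T) →
    ∀ T', App D i T' → trigRank D T' = trigRank D T + 1

/-- breadth-first derivation (w.r.t. an applicability criterion) -/
def BreadthFirst (App : ChaseDerivation 𝓡 F → ℕ → Trigger → Prop)
    (D : ChaseDerivation 𝓡 F) : Prop :=
  RankCompatible D ∧ RankExhaustive App D

/-- an E-chase derivation: an E-breadth-first derivation in which every trigger is
E-applicable on the preceding subderivation -/
def EChase (D : ChaseDerivation 𝓡 F) : Prop :=
  BreadthFirst AppE D ∧ ∀ i T, D.tr (i+1) = some T → AppE D i T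

/-- exhaustiveness: for every `i` and every trigger applicable on `D₀,…,Dᵢ` there is
`k ≥ i` such that either `D_k = (R,π,F_k)` or the trigger is not applicable on
`D₀,…,D_k` -/
def Exhaustive (App : ChaseDerivation 𝓡 F → ℕ → Trigger → Prop)
    (D : ChaseDerivation 𝓡 F) : Prop :=
  ∀ i T, App D i T →
    ∃ k, i ≤ k ∧ ((∃ T', D.tr k = some T' ∧ TrigEquiv T T') ∨ ¬ App D k T)

/-- the derivation is finite -/
def IsFiniteDeriv (D : ChaseDerivation 𝓡 F) : Prop := ∃ n, ∀ m, n ≤ m → D.tr m = none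

/-- a terminating derivation: exhaustive and finite -/
def Terminating (App : ChaseDerivation 𝓡 F → ℕ → Trigger → Prop)
    (D : ChaseDerivation 𝓡 F) : Prop :=
  Exhaustive App D ∧ IsFiniteDeriv D

/-- `D'` is a subderivation of `D`: its sequence of triggers is a subsequence of
that of `D` -/
def IsSubderivation (D' : ChaseDerivation 𝓡 G) (D : ChaseDerivation 𝓡 F) : Prop :=
  ∃ φ : ℕ → ℕ, StrictMono φ ∧
    ∀ i T, D'.tr (i+1) = some T → ∃ T', D.tr (φ i + 1) = some T' ∧ TrigEquiv T T'

/-- `D'` is the restriction of `D` induced by `G`: the maximal derivation from `G`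
and `𝓡` whose sequence of triggers is a subsequence of that of `D` -/
def IsRestriction (D : ChaseDerivation 𝓡 F) (G : Set XAtom) (D' : ChaseDerivation 𝓡 G) : Prop :=
  IsSubderivation D' D ∧
  ∀ D'' : ChaseDerivation 𝓡 G, IsSubderivation D'' D → IsSubderivation D'' D'

/-- `A'` is a direct ancestor of `A` in `D`: for some element `Dᵢ = (Rᵢ,πᵢ,Fᵢ)` of
`D`, `A' ∈ πᵢ(Bᵢ)` and `A ∈ Fᵢ \ Fᵢ₋₁` -/
def DirectAnc (D : ChaseDerivation 𝓡 F) (A' A : XAtom) : Prop :=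
  ∃ i T, D.tr (i+1) = some T ∧ A' ∈ applySet T.π T.rule.bodySet ∧
    A ∈ D.facts (i+1) ∧ A ∉ D.facts i

/-- the set of ancestors of an atom: the transitive closure of the direct-ancestor
relation -/
def Anc (D : ChaseDerivation 𝓡 F) (A : XAtom) : Set XAtom :=
  {A' | Relation.TransGen (DirectAnc D) A' A}

/-- the ancestors of a trigger `(R,π)`: the atoms of `π(B)` together with the
ancestors of these atoms -/
def TrigAnc (D : ChaseDerivation 𝓡 F) (T : Trigger) : Set XAtom :=
  applySet T.π T.rule.bodySet ∪ ⋃ A ∈ applySet T.π T.rule.bodySet, Anc D A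

end Chase

open Chase

namespace ChaseAux

open Chase Classical

variable {𝓡 : Set XRule} {F : Set XAtom}

lemma le_listMax {x : ℕ} : ∀ {l : List ℕ}, x ∈ l → x ≤ listMax l
  | a :: t, h => by
    rcases List.mem_cons.mp h with h | h
    · subst h; exact le_max_left _ _
    · exact le_trans (le_listMax h) (le_max_right _ _)

lemma producedAt_some {D : ChaseDerivation 𝓡 F} {i : ℕ} {T : Trigger}
    (h : D.tr i = some T) :
    producedAt D i = applySet (safeExt T.rule T.π) T.rule.headSet := by
  simp [producedAt, h]

lemma producedAt_none {D : ChaseDerivation 𝓡 F} {i : ℕ} (h : D.tr i = none) :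
    producedAt D i = ∅ := by
  simp [producedAt, h]

lemma producedAt_zero (D : ChaseDerivation 𝓡 F) : producedAt D 0 = ∅ :=
  producedAt_none D.tr_zero

lemma facts_succ (D : ChaseDerivation 𝓡 F) (i : ℕ) :
    D.facts (i + 1) = D.facts i ∪ producedAt D (i + 1) := by
  cases h : D.tr (i + 1) with
  | none => rw [D.step_none i h, producedAt_none h, Set.union_empty]
  | some T => rw [(D.step_some i T h).2.2, producedAt_some h]

lemma facts_mono (D : ChaseDerivation 𝓡 F) : Monotone D.facts :=
  monotone_nat_of_le_succ fun i => by
    rw [facts_succ]; exact Set.subset_union_left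

lemma mem_facts_iff {D : ChaseDerivation 𝓡 F} {A : XAtom} {j : ℕ} :
    A ∈ D.facts j ↔ A ∈ F ∨ ∃ i ≤ j, A ∈ producedAt D i := by
  induction j with
  | zero =>
    rw [D.facts_zero]
    constructor
    · exact Or.inl
    · rintro (h | ⟨i, hi, h⟩)
      · exact h
      · rw [Nat.le_zero.mp hi, producedAt_zero] at h; exact h.elim
  | succ j ih =>
    rw [facts_succ D j, Set.mem_union, ih]
    constructor
    · rintro ((h | ⟨i, hi, h⟩) | h)
      · exact Or.inl h
      · exact Or.inr ⟨i, hi.trans (Nat.le_succ j), h⟩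
      · exact Or.inr ⟨j + 1, le_rfl, h⟩
    · rintro (h | ⟨i, hi, h⟩)
      · exact Or.inl (Or.inl h)
      · by_cases hij : i ≤ j
        · exact Or.inl (Or.inr ⟨i, hij, h⟩)
        · have : i = j + 1 := by omega
          subst this; exact Or.inr h

lemma firstProd_eq {D : ChaseDerivation 𝓡 F} {A : XAtom}
    (hprod : ∃ i, A ∈ producedAt D i) :
    firstProd D A = Nat.find hprod := by
  rw [firstProd, dif_pos hprod]

lemma firstProd_pos {D : ChaseDerivation 𝓡 F} {A : XAtom}
    (hprod : ∃ i, A ∈ producedAt D i) : 0 < Nat.find hprod := by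
  refine Nat.pos_of_ne_zero fun h => ?_
  have := Nat.find_spec hprod
  rw [h, producedAt_zero] at this
  exact this

lemma mem_facts_iff_firstProd {D : ChaseDerivation 𝓡 F} {A : XAtom} (hA : A ∉ F)
    (hprod : ∃ i, A ∈ producedAt D i) {j : ℕ} :
    A ∈ D.facts j ↔ Nat.find hprod ≤ j := by
  constructor
  · intro h
    rcases mem_facts_iff.mp h with h | ⟨i, hij, h⟩
    · exact absurd h hA
    · exact le_trans (Nat.find_le h) hij
  · intro h
    apply facts_mono D h
    obtain ⟨m, hm⟩ := Nat.exists_eq_add_of_lt (firstProd_pos hprod)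
    have : 0 + m + 1 = Nat.find hprod := by omega
    rw [← this, facts_succ]
    refine Set.mem_union_right _ ?_
    rw [this]
    exact Nat.find_spec hprod

lemma tr_firstProd_some {D : ChaseDerivation 𝓡 F} {A : XAtom}
    (hprod : ∃ i, A ∈ producedAt D i) :
    ∃ T, D.tr (Nat.find hprod) = some T := by
  cases h : D.tr (Nat.find hprod) with
  | none =>
    have := Nat.find_spec hprod
    rw [producedAt_none h] at this
    exact this.elim
  | some T => exact ⟨T, rfl⟩

lemma rankStep_eq {D : ChaseDerivation 𝓡 F} (prev : XAtom → ℕ) {A : XAtom}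
    (h0 : A ∉ D.facts 0) (hprod : ∃ i, A ∈ producedAt D i)
    {T : Trigger} (hT : D.tr (Nat.find hprod) = some T) :
    rankStep D prev A = 1 + listMax ((T.rule.body.map (applyAtom T.π)).map prev) := by
  rw [rankStep, if_neg h0, dif_pos hprod, hT]

lemma rankStep_zero_of_mem {D : ChaseDerivation 𝓡 F} (prev : XAtom → ℕ) {A : XAtom}
    (h0 : A ∈ D.facts 0) : rankStep D prev A = 0 := by
  rw [rankStep, if_pos h0]

lemma rankStep_zero_of_not_prod {D : ChaseDerivation 𝓡 F} (prev : XAtom → ℕ) {A : XAtom}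
    (h0 : A ∉ D.facts 0) (hprod : ¬ ∃ i, A ∈ producedAt D i) :
    rankStep D prev A = 0 := by
  rw [rankStep, if_neg h0, dif_neg hprod]

lemma rank_zero_of_memF {D : ChaseDerivation 𝓡 F} {A : XAtom} (hA : A ∈ F) :
    rank D A = 0 := by
  have h0 : A ∈ D.facts 0 := by rw [D.facts_zero]; exact hA
  rw [rank, rankFuel, rankStep_zero_of_mem _ h0]

lemma rankFuel_zero_of_memF {D : ChaseDerivation 𝓡 F} {A : XAtom} (hA : A ∈ F)
    {n : ℕ} (hn : 1 ≤ n) : rankFuel D n A = 0 := by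
  obtain ⟨m, rfl⟩ := Nat.exists_eq_add_of_le hn
  rw [Nat.add_comm]
  exact rankStep_zero_of_mem _ (by rw [D.facts_zero]; exact hA)

/-- body atoms of the trigger at step `i+1` belong to `facts i` -/
lemma body_mem_facts {D : ChaseDerivation 𝓡 F} {i : ℕ} {T : Trigger}
    (hT : D.tr (i + 1) = some T) {a : XAtom} (ha : a ∈ T.rule.body) :
    applyAtom T.π a ∈ D.facts i := by
  have h := (D.step_some i T hT).2.1.2
  exact h ⟨a, ha, rfl⟩

/-- stabilization: `rankFuel D n A = rank D A` for `n ≥ firstProd D A + 1` -/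
lemma rankFuel_stab {D : ChaseDerivation 𝓡 F} :
    ∀ n : ℕ, ∀ A : XAtom, firstProd D A + 1 ≤ n → rankFuel D n A = rank D A := by
  intro n
  induction n using Nat.strong_induction_on with
  | _ n IH =>
    intro A hn
    rcases eq_or_lt_of_le hn with heq | hlt
    · rw [← heq]; rfl
    · -- n > firstProd D A + 1
      obtain ⟨n', rfl⟩ : ∃ n', n = n' + 1 := ⟨n - 1, by omega⟩
      show rankStep D (rankFuel D n') A = rank D A
      by_cases h0 : A ∈ D.facts 0
      · rw [rankStep_zero_of_mem _ h0, rank_zero_of_memF (show A ∈ F by rwa [D.facts_zero] at h0)]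
      by_cases hprod : ∃ i, A ∈ producedAt D i
      · obtain ⟨T, hT⟩ := tr_firstProd_some hprod
        have hfp : firstProd D A = Nat.find hprod := firstProd_eq hprod
        have hm1 : 0 < Nat.find hprod := firstProd_pos hprod
        have hrank : rank D A = rankStep D (rankFuel D (Nat.find hprod)) A := by
          rw [rank, hfp]; rfl
        rw [hrank, rankStep_eq _ h0 hprod hT, rankStep_eq _ h0 hprod hT]
        congr 1
        have hbody : ∀ a ∈ T.rule.body, rankFuel D n' (applyAtom T.π a)
            = rankFuel D (Nat.find hprod) (applyAtom T.π a) := by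
          intro a ha
          obtain ⟨i, hi⟩ : ∃ i, Nat.find hprod = i + 1 :=
            ⟨Nat.find hprod - 1, by omega⟩
          have hmem : applyAtom T.π a ∈ D.facts i :=
            body_mem_facts (by rw [← hi]; exact hT) ha
          set b := applyAtom T.π a
          by_cases hbF : b ∈ F
          · rw [rankFuel_zero_of_memF hbF (by omega), rankFuel_zero_of_memF hbF (by omega)]
          · have hprodb : ∃ j, b ∈ producedAt D j := by
              rcases mem_facts_iff.mp hmem with h | ⟨j, _, h⟩
              · exact absurd h hbF
              · exact ⟨j, h⟩
            have hfpb : Nat.find hprodb ≤ i := by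
              rcases mem_facts_iff.mp hmem with h | ⟨j, hji, h⟩
              · exact absurd h hbF
              · exact le_trans (Nat.find_le h) hji
            have hfpb' : firstProd D b + 1 ≤ i + 1 := by
              rw [firstProd_eq hprodb]; omega
            rw [IH n' (by omega) b (by rw [firstProd_eq hprodb]; omega), hi,
              IH (i + 1) (by omega) b hfpb']
        rw [List.map_map, List.map_map]
        exact congrArg listMax (List.map_congr_left (by simpa using hbody))
      · rw [rankStep_zero_of_not_prod _ h0 hprod, rank, rankFuel,
          rankStep_zero_of_not_prod _ h0 hprod]

/-- the rank unfolding lemma -/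
lemma rank_unfold {D : ChaseDerivation 𝓡 F} {A : XAtom} (hA : A ∉ F)
    (hprod : ∃ i, A ∈ producedAt D i) {T : Trigger}
    (hT : D.tr (Nat.find hprod) = some T) :
    rank D A = 1 + listMax ((T.rule.body.map (applyAtom T.π)).map (rank D)) := by
  have h0 : A ∉ D.facts 0 := by rw [D.facts_zero]; exact hA
  obtain ⟨i, hi⟩ : ∃ i, Nat.find hprod = i + 1 :=
    ⟨Nat.find hprod - 1, by have := firstProd_pos hprod; omega⟩
  have h1 : rank D A = rankStep D (rankFuel D (Nat.find hprod)) A := by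
    rw [rank, firstProd_eq hprod]; rfl
  rw [h1, rankStep_eq _ h0 hprod hT]
  congr 1
  rw [List.map_map, List.map_map]
  refine congrArg listMax (List.map_congr_left ?_)
  intro a ha
  simp only [Function.comp_apply]
  have hmem : applyAtom T.π a ∈ D.facts i := body_mem_facts (hi ▸ hT) ha
  set b := applyAtom T.π a
  by_cases hbF : b ∈ F
  · rw [rankFuel_zero_of_memF hbF (by omega), rank_zero_of_memF hbF]
  · have hprodb : ∃ j, b ∈ producedAt D j := by
      rcases mem_facts_iff.mp hmem with h | ⟨j, _, h⟩
      · exact absurd h hbF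
      · exact ⟨j, h⟩
    have hfpb : Nat.find hprodb ≤ i := by
      rcases mem_facts_iff.mp hmem with h | ⟨j, hji, h⟩
      · exact absurd h hbF
      · exact le_trans (Nat.find_le h) hji
    exact rankFuel_stab (Nat.find hprod) b (by rw [firstProd_eq hprodb]; omega)

lemma not_directAnc_of_memF {D : ChaseDerivation 𝓡 F} {A : XAtom} (hA : A ∈ F)
    (A' : XAtom) : ¬ DirectAnc D A' A := by
  rintro ⟨i, T, _, _, _, hnot⟩
  exact hnot (facts_mono D (Nat.zero_le i) (by rw [D.facts_zero]; exact hA))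

lemma anc_empty_of_memF {D : ChaseDerivation 𝓡 F} {A : XAtom} (hA : A ∈ F) :
    Anc D A = ∅ := by
  ext x
  simp only [Anc, Set.mem_setOf_eq, Set.mem_empty_iff_false, iff_false]
  intro h
  cases h with
  | single h => exact not_directAnc_of_memF hA _ h
  | tail _ h => exact not_directAnc_of_memF hA _ h

lemma directAnc_mem_body {D : ChaseDerivation 𝓡 F} {A : XAtom} (hA : A ∉ F)
    (hprod : ∃ i, A ∈ producedAt D i) {i : ℕ} {T : Trigger}
    (hT : D.tr (i + 1) = some T) (hfp : Nat.find hprod = i + 1)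
    {b : XAtom} (h : DirectAnc D b A) : b ∈ applySet T.π T.rule.bodySet := by
  obtain ⟨i', T', hT', hb, hin, hout⟩ := h
  have h1 : Nat.find hprod ≤ i' + 1 := (mem_facts_iff_firstProd hA hprod).mp hin
  have h2 : ¬ Nat.find hprod ≤ i' := fun hle =>
    hout ((mem_facts_iff_firstProd hA hprod).mpr hle)
  have : i' = i := by omega
  subst this
  rw [hT] at hT'
  cases hT'
  exact hb

lemma ncard_list_biUnion_le (S : XAtom → Set XAtom) (hS : ∀ b, (S b).Finite) :
    ∀ l : List XAtom, (⋃ b ∈ l, S b).ncard ≤ (l.map fun b => (S b).ncard).sum := by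
  intro l
  induction l with
  | nil => simp
  | cons a t ih =>
    have heq : (⋃ b ∈ (a :: t), S b) = S a ∪ ⋃ b ∈ t, S b := by
      ext x; simp [List.mem_cons, or_and_right, Set.mem_iUnion, exists_or]
    rw [heq, List.map_cons, List.sum_cons]
    exact le_trans (Set.ncard_union_le _ _) (Nat.add_le_add_left ih _)

end ChaseAux


/-- the ancestor clue, atom version.  If every rule body of `𝓡` has at
most `b` atoms and `D` is a derivation from a factbase `F` and `𝓡`, then for every
atom `A` of rank `k` in `D`, `|F ∩ Anc(A,D)| ≤ b^k`. -/
theorem ancestor_clue_atoms (b : ℕ) (𝓡 : Set XRule) (hb : ∀ R ∈ 𝓡, R.body.length ≤ b)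
    (F : Set XAtom) (hF : F.Finite) (D : ChaseDerivation 𝓡 F)
    (A : XAtom) (hA : A ∈ allAtoms D) (k : ℕ) (hk : rank D A = k) :
    (F ∩ Anc D A).ncard ≤ b ^ k := by
  classical
  induction k using Nat.strong_induction_on generalizing A with
  | _ k IH =>
  by_cases hAF : A ∈ F
  · rw [ChaseAux.anc_empty_of_memF hAF, Set.inter_empty, Set.ncard_empty]
    exact Nat.zero_le _
  · -- A was produced
    obtain ⟨j, hj⟩ := Set.mem_iUnion.mp hA
    have hprod : ∃ i, A ∈ producedAt D i := by
      rcases ChaseAux.mem_facts_iff.mp hj with h | ⟨i, _, h⟩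
      · exact absurd h hAF
      · exact ⟨i, h⟩
    obtain ⟨i, hfp⟩ : ∃ i, Nat.find hprod = i + 1 :=
      ⟨Nat.find hprod - 1, by have := ChaseAux.firstProd_pos hprod; omega⟩
    obtain ⟨T, hT⟩ := ChaseAux.tr_firstProd_some hprod
    have hT' : D.tr (i + 1) = some T := by rw [← hfp]; exact hT
    have hrank := ChaseAux.rank_unfold hAF hprod hT
    set L : List XAtom := T.rule.body.map (applyAtom T.π) with hL
    set K : ℕ := listMax (L.map (rank D)) with hK
    have hkK : k = K + 1 := by rw [← hk, hrank]; omega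
    -- the per-ancestor sets
    set S : XAtom → Set XAtom := fun c => F ∩ ({c} ∪ Anc D c) with hS
    have hSfin : ∀ c, (S c).Finite := fun c => hF.subset Set.inter_subset_left
    -- inclusion
    have hsub : F ∩ Anc D A ⊆ ⋃ c ∈ L, S c := by
      rintro x ⟨hxF, hxA⟩
      have hdec : ∃ c, DirectAnc D c A ∧ (x = c ∨ x ∈ Anc D c) := by
        cases hxA with
        | single h => exact ⟨x, h, Or.inl rfl⟩
        | @tail c _ hxc hcA => exact ⟨c, hcA, Or.inr hxc⟩
      obtain ⟨c, hcA, hxc⟩ := hdec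
      have hcL : c ∈ L := by
        have := ChaseAux.directAnc_mem_body hAF hprod hT' hfp hcA
        obtain ⟨a, ha, rfl⟩ := this
        exact List.mem_map.mpr ⟨a, ha, rfl⟩
      refine Set.mem_biUnion hcL ⟨hxF, ?_⟩
      rcases hxc with rfl | hxc
      · exact Or.inl rfl
      · exact Or.inr hxc
    have hfinU : (⋃ c ∈ L, S c).Finite :=
      Set.Finite.biUnion L.finite_toSet fun c _ => hSfin c
    have h1 : (F ∩ Anc D A).ncard ≤ (⋃ c ∈ L, S c).ncard :=
      Set.ncard_le_ncard hsub hfinU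
    have h2 := ChaseAux.ncard_list_biUnion_le S hSfin L
    -- per-term bound
    rcases Nat.eq_zero_or_pos b with rfl | hb1
    · -- b = 0 : body is empty
      have hRin : T.rule ∈ 𝓡 := (D.step_some i T hT').1
      have : T.rule.body = [] := List.length_eq_zero_iff.mp (Nat.le_zero.mp (hb _ hRin))
      have hLnil : L = [] := by rw [hL, this]; rfl
      rw [hkK]
      calc (F ∩ Anc D A).ncard ≤ _ := le_trans h1 h2
        _ = 0 := by rw [hLnil]; rfl
        _ ≤ 0 ^ (K + 1) := Nat.zero_le _
    · have hterm : ∀ c ∈ L, (S c).ncard ≤ b ^ K := by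
        intro c hcL
        have hrc : rank D c ≤ K := by
          refine ChaseAux.le_listMax ?_
          exact List.mem_map.mpr ⟨c, hcL, rfl⟩
        by_cases hcF : c ∈ F
        · have : S c = F ∩ {c} := by
            rw [hS]; simp only
            rw [ChaseAux.anc_empty_of_memF hcF, Set.union_empty]
          rw [this]
          calc (F ∩ {c}).ncard ≤ ({c} : Set XAtom).ncard :=
                Set.ncard_le_ncard Set.inter_subset_right (Set.finite_singleton c)
            _ = 1 := Set.ncard_singleton c
            _ ≤ b ^ K := Nat.one_le_pow _ _ hb1
        · have hSc : S c = F ∩ Anc D c := by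
            rw [hS]; simp only
            ext x
            simp only [Set.mem_inter_iff, Set.mem_union, Set.mem_singleton_iff]
            constructor
            · rintro ⟨hxF, rfl | hx⟩
              · exact absurd hxF hcF
              · exact ⟨hxF, hx⟩
            · rintro ⟨hxF, hx⟩; exact ⟨hxF, Or.inr hx⟩
          -- c is in allAtoms
          obtain ⟨a, ha, rfl⟩ := List.mem_map.mp hcL
          have hcfacts : applyAtom T.π a ∈ D.facts i := ChaseAux.body_mem_facts hT' ha
          have hcall : applyAtom T.π a ∈ allAtoms D := Set.mem_iUnion.mpr ⟨i, hcfacts⟩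
          rw [hSc]
          calc (F ∩ Anc D (applyAtom T.π a)).ncard ≤ b ^ rank D (applyAtom T.π a) :=
                IH _ (by omega) _ hcall rfl
            _ ≤ b ^ K := Nat.pow_le_pow_right hb1 hrc
      have h3 : ((L.map fun c => (S c).ncard)).sum ≤ L.length * b ^ K := by
        have := List.sum_le_card_nsmul (L.map fun c => (S c).ncard) (b ^ K) ?_
        · simpa using this
        · intro x hx
          obtain ⟨c, hc, rfl⟩ := List.mem_map.mp hx
          exact hterm c hc
      have hlen : L.length ≤ b := by
        rw [hL, List.length_map]
        exact hb _ (D.step_some i T hT').1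
      calc (F ∩ Anc D A).ncard ≤ L.length * b ^ K := le_trans h1 (le_trans h2 h3)
        _ ≤ b * b ^ K := Nat.mul_le_mul_right _ hlen
        _ = b ^ k := by rw [hkK, pow_succ]; ring
end

section
/- Lemma (ancestor clue, trigger version): Let 𝓡 be a ruleset in which every rule body has at most b atoms, and let D be a derivation from a factbase F and 𝓡. Then for every trigger (R,π) of rank k in D, the number of ancestors of (R,π) that belong to F is at most b^k, i.e., |F ∩ Anc((R,π),D)| ≤ b^k. -/
open Chase


/-! An atom created at step `i+1` of `D` has exactly the atoms of that trigger's body as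
direct ancestors, and its rank is that trigger's rank. So the `F`-ancestors of a trigger
are covered by those of its at most `b` body atoms, each of which has smaller rank, and
induction on the rank gives the bound `b ^ k`. -/

theorem Finset.sum_pow_le_pow_succ {α : Type*} (s : Finset α) (f : α → ℕ) {b M : ℕ}
    (hs : s.card ≤ b) (hf : ∀ a ∈ s, f a ≤ M) : ∑ a ∈ s, b ^ f a ≤ b ^ (M + 1) := by
  rcases s.eq_empty_or_nonempty with rfl | hne
  · simp
  have hb : 1 ≤ b := hne.card_pos.trans_le hs
  calc ∑ a ∈ s, b ^ f a ≤ s.card • b ^ M :=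
        Finset.sum_le_card_nsmul _ _ _ fun a ha => Nat.pow_le_pow_right hb (hf a ha)
    _ ≤ b * b ^ M := Nat.mul_le_mul_right _ hs
    _ = b ^ (M + 1) := (pow_succ' b M).symm

theorem le_listMax {l : List ℕ} {x : ℕ} (h : x ∈ l) : x ≤ listMax l :=
  List.le_max_of_le h le_rfl

namespace Chase

variable {𝓡 : Set XRule} {F : Set XAtom}

theorem facts_mono (D : ChaseDerivation 𝓡 F) : Monotone D.facts := by
  refine monotone_nat_of_le_succ fun i => ?_
  cases h : D.tr (i + 1) with
  | none => rw [D.step_none i h]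
  | some T => rw [(D.step_some i T h).2.2]; exact Set.subset_union_left

def Creates (D : ChaseDerivation 𝓡 F) (i : ℕ) (T : Trigger) (A : XAtom) : Prop :=
  D.tr (i + 1) = some T ∧ A ∈ D.facts (i + 1) ∧ A ∉ D.facts i

theorem directAnc_iff (D : ChaseDerivation 𝓡 F) {A' A : XAtom} :
    DirectAnc D A' A ↔ ∃ i T, Creates D i T A ∧ A' ∈ applySet T.π T.rule.bodySet := by
  constructor
  · rintro ⟨i, T, hT, hA', hA⟩
    exact ⟨i, T, ⟨hT, hA⟩, hA'⟩
  · rintro ⟨i, T, ⟨hT, hA⟩, hA'⟩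
    exact ⟨i, T, hT, hA', hA⟩

namespace Creates

variable {D : ChaseDerivation 𝓡 F} {i j : ℕ} {T T' : Trigger} {A : XAtom}

theorem unique (h : Creates D i T A) (h' : Creates D j T' A) : i = j ∧ T = T' := by
  obtain ⟨hT, hA, hA'⟩ := h
  obtain ⟨hT', hB, hB'⟩ := h'
  have hij : i = j := by
    by_contra hne
    rcases Nat.lt_or_gt_of_ne hne with hlt | hlt
    · exact hB' (facts_mono D hlt hA)
    · exact hA' (facts_mono D hlt hB)
  subst hij
  exact ⟨rfl, Option.some_injective _ (hT.symm.trans hT')⟩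

theorem not_mem_facts_zero (h : Creates D i T A) : A ∉ D.facts 0 :=
  fun h0 => h.2.2 (facts_mono D (Nat.zero_le i) h0)

theorem body_subset (h : Creates D i T A) : applySet T.π T.rule.bodySet ⊆ D.facts i :=
  (D.step_some i T h.1).2.1.2

theorem mem_producedAt (h : Creates D i T A) : A ∈ producedAt D (i + 1) := by
  obtain ⟨hT, hA, hA'⟩ := h
  rw [(D.step_some i T hT).2.2] at hA
  simpa only [producedAt, hT] using hA.resolve_left hA'

open Classical in
theorem find_producedAt (h : Creates D i T A) :
    ∃ hp : ∃ l, A ∈ producedAt D l, Nat.find hp = i + 1 := by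
  refine ⟨⟨_, h.mem_producedAt⟩, (Nat.find_eq_iff _).2 ⟨h.mem_producedAt, fun l hl hA => ?_⟩⟩
  have hAl : A ∈ D.facts l := by
    cases hl' : D.tr l with
    | none => simp only [producedAt, hl'] at hA; exact hA.elim
    | some T' =>
      obtain ⟨l, rfl⟩ : ∃ l', l = l' + 1 :=
        Nat.exists_eq_succ_of_ne_zero fun h0 => by simp [h0, D.tr_zero] at hl'
      rw [(D.step_some l T' hl').2.2]
      simp only [producedAt, hl'] at hA
      exact Or.inr hA
  exact h.2.2 (facts_mono D (by omega) hAl)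

open Classical in
theorem rankStep_eq (h : Creates D i T A) (prev : XAtom → ℕ) :
    rankStep D prev A = 1 + listMax ((T.rule.body.map (applyAtom T.π)).map prev) := by
  obtain ⟨hp, hfind⟩ := h.find_producedAt
  simp only [rankStep, if_neg h.not_mem_facts_zero, dif_pos hp, hfind, h.1]

theorem firstProd_eq (h : Creates D i T A) : firstProd D A = i + 1 := by
  obtain ⟨hp, hfind⟩ := h.find_producedAt
  rw [firstProd, dif_pos hp, hfind]

end Creates

theorem exists_creates_of_mem_facts (D : ChaseDerivation 𝓡 F) {i : ℕ} {A : XAtom}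
    (hA : A ∈ D.facts i) (h0 : A ∉ D.facts 0) : ∃ j T, j < i ∧ Creates D j T A := by
  induction i with
  | zero => exact absurd hA h0
  | succ i ih =>
    by_cases hi : A ∈ D.facts i
    · obtain ⟨j, T, hj, hc⟩ := ih hi
      exact ⟨j, T, by omega, hc⟩
    · cases hT : D.tr (i + 1) with
      | none => rw [D.step_none i hT] at hA; exact absurd hA hi
      | some T => exact ⟨i, T, by omega, hT, hA, hi⟩

theorem anc_eq_empty_of_forall_not_creates (D : ChaseDerivation 𝓡 F) {A : XAtom}
    (h : ∀ i T, ¬ Creates D i T A) : Anc D A = ∅ := by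
  refine Set.eq_empty_of_forall_notMem fun A' hA' => ?_
  obtain ⟨_, _, hdir⟩ := Relation.TransGen.tail'_iff.1 hA'
  obtain ⟨i, T, hc, _⟩ := (directAnc_iff D).1 hdir
  exact h i T hc

theorem Creates.anc_eq {D : ChaseDerivation 𝓡 F} {i : ℕ} {T : Trigger} {A : XAtom}
    (h : Creates D i T A) : Anc D A = TrigAnc D T := by
  have hdir : ∀ A', DirectAnc D A' A ↔ A' ∈ applySet T.π T.rule.bodySet := fun A' => by
    rw [directAnc_iff]
    constructor
    · rintro ⟨j, T', hc, hA'⟩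
      rwa [(h.unique hc).2]
    · exact fun hA' => ⟨i, T, h, hA'⟩
  ext x
  change Relation.TransGen (DirectAnc D) x A ↔ _
  rw [Relation.TransGen.tail'_iff]
  simp only [hdir, TrigAnc, Set.mem_union, Set.mem_iUnion, exists_prop]
  constructor
  · rintro ⟨y, hxy, hy⟩
    rcases Relation.reflTransGen_iff_eq_or_transGen.1 hxy with rfl | hxy
    exacts [Or.inl hy, Or.inr ⟨y, hy, hxy⟩]
  · rintro (hx | ⟨y, hy, hxy⟩)
    exacts [⟨x, .refl, hx⟩, ⟨y, hxy.to_reflTransGen, hy⟩]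

theorem rankFuel_of_mem_facts_zero (D : ChaseDerivation 𝓡 F) {A : XAtom} (h : A ∈ D.facts 0) :
    ∀ n, rankFuel D n A = 0
  | 0 => rfl
  | _ + 1 => by simp only [rankFuel, rankStep, if_pos h]

theorem rankFuel_eq_of_mem_facts (D : ChaseDerivation 𝓡 F) {i : ℕ} :
    ∀ {A : XAtom}, A ∈ D.facts i → ∀ {n : ℕ}, i < n → rankFuel D n A = rankFuel D (i + 1) A := by
  induction i using Nat.strong_induction_on with
  | _ i IH =>
  intro A hA n hn
  by_cases h0 : A ∈ D.facts 0
  · rw [rankFuel_of_mem_facts_zero D h0, rankFuel_of_mem_facts_zero D h0]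
  obtain ⟨j, T, hji, hc⟩ := exists_creates_of_mem_facts D hA h0
  obtain ⟨n, rfl⟩ : ∃ n', n = n' + 1 := Nat.exists_eq_succ_of_ne_zero (by omega)
  simp only [rankFuel, hc.rankStep_eq]
  congr 2
  refine List.map_congr_left fun A' hA' => ?_
  have hA'j : A' ∈ D.facts j := hc.body_subset (by simpa [applySet, XRule.bodySet] using hA')
  rw [IH j hji hA'j (by omega), IH j hji hA'j hji]

theorem rank_eq_rankFuel (D : ChaseDerivation 𝓡 F) {i : ℕ} {A : XAtom} (hA : A ∈ D.facts i) :
    rank D A = rankFuel D (i + 1) A := by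
  by_cases h0 : A ∈ D.facts 0
  · rw [rank, rankFuel_of_mem_facts_zero D h0, rankFuel_of_mem_facts_zero D h0]
  obtain ⟨j, T, hji, hc⟩ := exists_creates_of_mem_facts D hA h0
  rw [rank, hc.firstProd_eq, rankFuel_eq_of_mem_facts D hc.2.1 (n := i + 1) (by omega)]

theorem Creates.rank_eq {D : ChaseDerivation 𝓡 F} {i : ℕ} {T : Trigger} {A : XAtom}
    (h : Creates D i T A) : rank D A = trigRank D T := by
  rw [rank_eq_rankFuel D h.2.1, rankFuel, h.rankStep_eq, trigRank]
  congr 2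
  refine List.map_congr_left fun A' hA' => (rank_eq_rankFuel D ?_).symm
  exact h.body_subset (by simpa [applySet, XRule.bodySet] using hA')

theorem trigAnc_eq_biUnion (D : ChaseDerivation 𝓡 F) (T : Trigger) :
    TrigAnc D T = ⋃ A' ∈ applySet T.π T.rule.bodySet, insert A' (Anc D A') := by
  ext x
  simp only [TrigAnc, Set.mem_union, Set.mem_iUnion, Set.mem_insert_iff, exists_prop]
  constructor
  · rintro (hx | ⟨y, hy, hxy⟩)
    exacts [⟨x, hx, Or.inl rfl⟩, ⟨y, hy, Or.inr hxy⟩]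
  · rintro ⟨y, hy, rfl | hxy⟩
    exacts [Or.inl hy, Or.inr ⟨y, hy, hxy⟩]

theorem ncard_inter_trigAnc_le (D : ChaseDerivation 𝓡 F) {b : ℕ} {T : Trigger}
    (hb : T.rule.body.length ≤ b)
    (hbody : ∀ A' ∈ applySet T.π T.rule.bodySet,
      (F ∩ insert A' (Anc D A')).ncard ≤ b ^ rank D A') :
    (F ∩ TrigAnc D T).ncard ≤ b ^ trigRank D T := by
  classical
  set L := T.rule.body.map (applyAtom T.π)
  have hL : applySet T.π T.rule.bodySet = ↑L.toFinset := by
    ext; simp [L, applySet, XRule.bodySet]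
  rw [trigAnc_eq_biUnion, Set.inter_iUnion₂, hL]
  calc (⋃ A' ∈ L.toFinset, F ∩ insert A' (Anc D A')).ncard
      ≤ ∑ A' ∈ L.toFinset, (F ∩ insert A' (Anc D A')).ncard :=
        Finset.set_ncard_biUnion_le _ _
    _ ≤ ∑ A' ∈ L.toFinset, b ^ rank D A' :=
        Finset.sum_le_sum fun A' hA' => hbody A' (hL ▸ hA')
    _ ≤ b ^ (listMax (L.map (rank D)) + 1) :=
        Finset.sum_pow_le_pow_succ _ _
          ((List.toFinset_card_le L).trans (by simpa [L] using hb))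
          fun A' hA' => le_listMax (List.mem_map_of_mem (List.mem_toFinset.1 hA'))
    _ = b ^ trigRank D T := by rw [trigRank, add_comm]

theorem ncard_inter_insert_anc_le {b : ℕ} (hb : ∀ R ∈ 𝓡, R.body.length ≤ b)
    (D : ChaseDerivation 𝓡 F) (A : XAtom) :
    (F ∩ insert A (Anc D A)).ncard ≤ b ^ rank D A := by
  induction hr : rank D A using Nat.strong_induction_on generalizing A with
  | _ r IH =>
  by_cases hc : ∃ i T, Creates D i T A
  · obtain ⟨i, T, hc⟩ := hc
    have hAF : A ∉ F := D.facts_zero ▸ hc.not_mem_facts_zero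
    rw [Set.inter_insert_of_notMem hAF, hc.anc_eq, ← hr, hc.rank_eq]
    refine ncard_inter_trigAnc_le D (hb _ (D.step_some i T hc.1).1) fun A' hA' => ?_
    refine IH _ ?_ A' rfl
    rw [← hr, hc.rank_eq, trigRank]
    exact Nat.lt_one_add_iff.2 (le_listMax (List.mem_map_of_mem
      (by simpa [applySet, XRule.bodySet] using hA')))
  · push Not at hc
    rw [anc_eq_empty_of_forall_not_creates D hc, insert_empty_eq]
    by_cases hAF : A ∈ F
    · have h0 : A ∈ D.facts 0 := by rwa [D.facts_zero]
      rw [← hr, rank_eq_rankFuel D h0, rankFuel_of_mem_facts_zero D h0, pow_zero]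
      exact (Set.ncard_le_ncard Set.inter_subset_right).trans (Set.ncard_singleton A).le
    · simp [Set.inter_singleton_eq_empty.2 hAF]

end Chase

theorem ancestor_clue_triggers_general (b : ℕ) (𝓡 : Set XRule) (hb : ∀ R ∈ 𝓡, R.body.length ≤ b)
    (F : Set XAtom) (D : ChaseDerivation 𝓡 F)
    (T : Trigger) (hT : ∃ i, D.tr i = some T) (k : ℕ) (hk : trigRank D T = k) :
    (F ∩ TrigAnc D T).ncard ≤ b ^ k := by
  obtain ⟨i, hi⟩ := hT
  obtain ⟨i, rfl⟩ : ∃ i', i = i' + 1 :=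
    Nat.exists_eq_succ_of_ne_zero fun h0 => by simp [h0, D.tr_zero] at hi
  subst hk
  exact ncard_inter_trigAnc_le D (hb _ (D.step_some i T hi).1)
    fun A' _ => ncard_inter_insert_anc_le hb D A'

/-- the ancestor clue, trigger version.  If every rule body of `𝓡` has
at most `b` atoms and `D` is a derivation from a factbase `F` and `𝓡`, then for
every trigger `(R,π)` of rank `k` in `D`, `|F ∩ Anc((R,π),D)| ≤ b^k`. -/
theorem ancestor_clue_triggers (b : ℕ) (𝓡 : Set XRule) (hb : ∀ R ∈ 𝓡, R.body.length ≤ b)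
    (F : Set XAtom) (hF : F.Finite) (D : ChaseDerivation 𝓡 F)
    (T : Trigger) (hT : ∃ i, D.tr i = some T) (k : ℕ) (hk : trigRank D T = k) :
    (F ∩ TrigAnc D T).ncard ≤ b ^ k :=
  ancestor_clue_triggers_general b 𝓡 hb F D T hT k hk
end

section
/- The O-chase is hereditary: for every O-chase derivation D from a factbase F and a ruleset 𝓡 and every F′ ⊆ F, the restriction D|F′ of D induced by F′ is an O-chase derivation from F′ and 𝓡. -/
open Chase

/-! The restriction `D|G` is computed by replaying `D` from `G`: a trigger of `D` is
applied exactly when its body already maps into the atoms replayed so far. By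
induction, every factbase of a subderivation of `D` from `G` lies inside the replay at
the corresponding position of `D`, so each of its triggers is applied by the replay
as well; hence the replay contains every subderivation, i.e. it is the maximal one. -/

lemma exists_strictMono_extension {S : Set ℕ} (hS : ∀ n, n + 1 ∈ S → n ∈ S) {f : ℕ → ℕ}
    (hf : ∀ n, n + 1 ∈ S → f n < f (n + 1)) :
    ∃ g : ℕ → ℕ, StrictMono g ∧ ∀ n ∈ S, g n = f n := by
  classical
  let g : ℕ → ℕ := fun n =>
    Nat.rec (f 0) (fun n gn => if n + 1 ∈ S then f (n + 1) else gn + 1) n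
  have hgf : ∀ n ∈ S, g n = f n := by
    rintro (_ | n) hn
    · rfl
    · exact if_pos hn
  refine ⟨g, strictMono_nat_of_lt_succ fun n => ?_, hgf⟩
  by_cases hn : n + 1 ∈ S
  · rw [hgf n (hS n hn), hgf _ hn]
    exact hf n hn
  · show g n < if n + 1 ∈ S then f (n + 1) else g n + 1
    rw [if_neg hn]
    exact Nat.lt_succ_self _

namespace Nat

variable {p : ℕ → Prop} [DecidablePred p] {n j : ℕ}

lemma nth_mem_of_lt_count (h : n < count p j) : p (nth p n) :=
  nth_mem n fun hf => h.trans_le (count_le_card hf j)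

lemma count_nth_of_lt_count (h : n < count p j) : count p (nth p n) = n :=
  count_nth fun hf => h.trans_le (count_le_card hf j)

end Nat

lemma applyAtom_congr {σ σ' : XTerm → XTerm} {a : XAtom} (h : ∀ t ∈ a.args, σ t = σ' t) :
    applyAtom σ a = applyAtom σ' a := by
  simp only [applyAtom, List.map_congr_left h]

lemma safeExt_congr {R : XRule} {π π' : XTerm → XTerm} (hc : constPreserving π)
    (hc' : constPreserving π') (h : ∀ t ∈ R.body.flatMap XAtom.args, π t = π' t)
    {a : XAtom} (ha : a ∈ R.head) {t : XTerm} (ht : t ∈ a.args) :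
    safeExt R π t = safeExt R π' t := by
  unfold safeExt
  split_ifs with hex
  · congr 1
    exact List.map_congr_left fun u hu => by rw [h u hu]
  · by_cases hv : t.isVar
    · have hbody : t ∈ listVars R.body := by
        by_contra hb
        exact hex ⟨⟨hv, a, ha, ht⟩, hb⟩
      obtain ⟨-, b, hb, htb⟩ := hbody
      exact h t (List.mem_flatMap.2 ⟨b, hb, htb⟩)
    · cases t with
      | const c => rw [hc, hc']
      | _ => exact absurd trivial hv

/-- the atoms `π^s(H)` added by the trigger -/
noncomputable def Trigger.output (T : Trigger) : Set XAtom :=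
  applySet (safeExt T.rule T.π) T.rule.headSet

namespace TrigEquiv

variable {T T' : Trigger}

lemma bodyImage_eq (h : TrigEquiv T T') :
    applySet T.π T.rule.bodySet = applySet T'.π T'.rule.bodySet := by
  obtain ⟨hr, hπ⟩ := h
  rw [← hr]
  exact Set.image_congr fun a ha => applyAtom_congr fun t ht =>
    hπ t (List.mem_flatMap.2 ⟨a, ha, ht⟩)

lemma output_eq (h : TrigEquiv T T') (hc : constPreserving T.π) (hc' : constPreserving T'.π) :
    T.output = T'.output := by
  obtain ⟨hr, hπ⟩ := h
  unfold Trigger.output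
  rw [← hr]
  exact Set.image_congr fun a ha => applyAtom_congr fun t ht =>
    safeExt_congr hc hc' hπ ha ht

end TrigEquiv

namespace ChaseDerivation

open Nat

attribute [local instance] Classical.propDecidable

variable {𝓡 : Set XRule} {F : Set XAtom} (D : ChaseDerivation 𝓡 F) (G : Set XAtom)

lemma isSubderivation_of_trigEquiv {G' : Set XAtom} {D' : ChaseDerivation 𝓡 G'} (f : ℕ → ℕ)
    (hf : ∀ n, D'.tr (n + 2) ≠ none → f n < f (n + 1))
    (htr : ∀ i T, D'.tr (i + 1) = some T → ∃ T', D.tr (f i + 1) = some T' ∧ TrigEquiv T T') :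
    IsSubderivation D' D := by
  obtain ⟨g, hg, hgf⟩ :=
    exists_strictMono_extension (S := {n | D'.tr (n + 1) ≠ none}) D'.closed hf
  exact ⟨g, hg, fun i T hT => hgf i (by simp [hT]) ▸ htr i T hT⟩

noncomputable def replay : ℕ → Set XAtom
  | 0 => G
  | i + 1 =>
    match D.tr (i + 1) with
    | some T => if isHom T.π T.rule.bodySet (replay i) then replay i ∪ T.output else replay i
    | none => replay i

/-- the trigger `D.tr (i + 1)` is applied by the replay -/
def Replays (i : ℕ) : Prop :=
  ∃ T, D.tr (i + 1) = some T ∧ isHom T.π T.rule.bodySet (D.replay G i)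

variable {D G}

lemma replay_succ_of_isHom {i : ℕ} {T : Trigger} (hT : D.tr (i + 1) = some T)
    (h : isHom T.π T.rule.bodySet (D.replay G i)) :
    D.replay G (i + 1) = D.replay G i ∪ T.output := by
  simp [replay, hT, h]

lemma replay_succ_of_not_replays {i : ℕ} (h : ¬ D.Replays G i) :
    D.replay G (i + 1) = D.replay G i := by
  cases hT : D.tr (i + 1) with
  | none => simp [replay, hT]
  | some T =>
    have hT' : ¬ isHom T.π T.rule.bodySet (D.replay G i) := fun hh => h ⟨T, hT, hh⟩
    simp [replay, hT, hT']

lemma replay_mono : Monotone (D.replay G) := by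
  refine monotone_nat_of_le_succ fun i => ?_
  by_cases h : D.Replays G i
  · obtain ⟨T, hT, hh⟩ := h
    rw [replay_succ_of_isHom hT hh]
    exact Set.subset_union_left
  · rw [replay_succ_of_not_replays h]

lemma replay_eq_of_count_eq {i j : ℕ} (hij : i ≤ j)
    (h : count (D.Replays G) i = count (D.Replays G) j) : D.replay G i = D.replay G j := by
  induction j, hij using Nat.le_induction with
  | base => rfl
  | succ j hij ih =>
    have hcount := count_monotone (D.Replays G)
    have hj : count (D.Replays G) i = count (D.Replays G) j :=
      le_antisymm (hcount hij) (h ▸ hcount j.le_succ)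
    rw [ih hj, replay_succ_of_not_replays (count_succ_eq_count_iff.1 (hj ▸ h).symm)]

lemma replay_subset_of_count_le {i j : ℕ}
    (h : count (D.Replays G) i ≤ count (D.Replays G) j) : D.replay G i ⊆ D.replay G j := by
  rcases le_total i j with hij | hji
  · exact replay_mono hij
  · exact (replay_eq_of_count_eq hji (le_antisymm (count_monotone _ hji) h)).ge

variable (D G)

/-- the triggers of the restriction: its `n+1`-st trigger is the `n`-th replayed one -/
noncomputable def restrictTr : ℕ → Option Trigger
  | 0 => none
  | n + 1 => if ∃ j, n < count (D.Replays G) j then D.tr (nth (D.Replays G) n + 1) else none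

/-- the factbases of the restriction: the atoms replayed before its `n+1`-st trigger -/
def restrictFacts (n : ℕ) : Set XAtom :=
  ⋃ (i) (_ : count (D.Replays G) i ≤ n), D.replay G i

variable {D G}

lemma restrictFacts_eq_replay {n i : ℕ} (h : count (D.Replays G) i = n) :
    D.restrictFacts G n = D.replay G i :=
  (Set.iUnion₂_subset fun _ hk => replay_subset_of_count_le (hk.trans h.ge)).antisymm
    (Set.subset_iUnion₂_of_subset i h.le le_rfl)

lemma restrictTr_count {j : ℕ} (h : D.Replays G j) :
    D.restrictTr G (count (D.Replays G) j + 1) = D.tr (j + 1) := by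
  have hlt : ∃ k, count (D.Replays G) j < count (D.Replays G) k :=
    ⟨j + 1, count_lt_count_succ_iff.2 h⟩
  simp only [restrictTr, if_pos hlt, nth_count h]

lemma restrictTr_succ_ne_none_iff {n : ℕ} :
    D.restrictTr G (n + 1) ≠ none ↔ ∃ j, n < count (D.Replays G) j := by
  refine ⟨fun h => by_contra fun hn => h (if_neg hn), fun hex => ?_⟩
  obtain ⟨T, hT, -⟩ := nth_mem_of_lt_count hex.choose_spec
  simp [restrictTr, if_pos hex, hT]

lemma restrictTr_eq_some {n : ℕ} {T : Trigger} (h : D.restrictTr G (n + 1) = some T) :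
    ∃ j, count (D.Replays G) j = n ∧ D.tr (j + 1) = some T ∧
      isHom T.π T.rule.bodySet (D.replay G j) := by
  have hex := restrictTr_succ_ne_none_iff.1 (h ▸ Option.some_ne_none T)
  have hT : D.tr (nth (D.Replays G) n + 1) = some T := by
    simpa only [restrictTr, if_pos hex] using h
  obtain ⟨j, hj⟩ := hex
  obtain ⟨T', hT', hhom⟩ := nth_mem_of_lt_count hj
  obtain rfl : T' = T := Option.some.inj (hT'.symm.trans hT)
  exact ⟨_, count_nth_of_lt_count hj, hT, hhom⟩

variable (D G)

noncomputable def restrict : ChaseDerivation 𝓡 G where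
  tr := D.restrictTr G
  facts := D.restrictFacts G
  tr_zero := rfl
  facts_zero := restrictFacts_eq_replay (count_zero _)
  step_some n T h := by
    obtain ⟨j, rfl, hT, hhom⟩ := restrictTr_eq_some h
    have hcount := count_succ_eq_succ_count_iff (p := D.Replays G) |>.2 ⟨T, hT, hhom⟩
    refine ⟨(D.step_some j T hT).1, (restrictFacts_eq_replay rfl).symm ▸ hhom, ?_⟩
    rw [restrictFacts_eq_replay rfl, restrictFacts_eq_replay hcount,
      replay_succ_of_isHom hT hhom]
    rfl
  step_none n h := by
    have hn : ∀ i, count (D.Replays G) i ≤ n := fun i =>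
      not_lt.1 fun hi => restrictTr_succ_ne_none_iff.2 ⟨i, hi⟩ h
    simp [restrictFacts, hn, fun i => (hn i).trans n.le_succ]
  closed n h := by
    obtain ⟨j, hj⟩ := restrictTr_succ_ne_none_iff.1 h
    exact restrictTr_succ_ne_none_iff.2 ⟨j, n.lt_succ_self.trans hj⟩
  distinct i j T T' hi hj hij := by
    obtain _ | n := i
    · cases hi
    obtain _ | m := j
    · cases hj
    obtain ⟨a, rfl, ha, -⟩ := restrictTr_eq_some hi
    obtain ⟨b, rfl, hb, -⟩ := restrictTr_eq_some hj
    exact D.distinct (a + 1) (b + 1) T T' ha hb (by rintro ⟨⟩; exact hij rfl)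

lemma restrict_isSubderivation : IsSubderivation (D.restrict G) D := by
  refine isSubderivation_of_trigEquiv D (nth (D.Replays G)) (fun n h => ?_) fun i T h => ?_
  · obtain ⟨j, hj⟩ := restrictTr_succ_ne_none_iff.1 h
    refine (count_monotone (D.Replays G)).reflect_lt ?_
    rw [count_nth_of_lt_count (n.lt_succ_self.trans hj), count_nth_of_lt_count hj]
    exact n.lt_succ_self
  · obtain ⟨j, rfl, hT, hhom⟩ := restrictTr_eq_some h
    exact ⟨T, by rwa [nth_count ⟨T, hT, hhom⟩], rfl, fun _ _ => rfl⟩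

variable {D G}

lemma replays_of_trigEquiv {j : ℕ} {T T' : Trigger} (hT' : D.tr (j + 1) = some T')
    (he : TrigEquiv T T') (hhom : isHom T.π T.rule.bodySet (D.replay G j)) :
    D.Replays G j ∧ D.replay G (j + 1) = D.replay G j ∪ T.output := by
  have hc' := (D.step_some j T' hT').2.1.1
  have hhom' : isHom T'.π T'.rule.bodySet (D.replay G j) := ⟨hc', he.bodyImage_eq ▸ hhom.2⟩
  exact ⟨⟨T', hT', hhom'⟩, by rw [replay_succ_of_isHom hT' hhom', he.output_eq hhom.1 hc']⟩

lemma facts_subset_replay {D' : ChaseDerivation 𝓡 G} {f : ℕ → ℕ} (hf : StrictMono f)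
    (htr : ∀ i T, D'.tr (i + 1) = some T → ∃ T', D.tr (f i + 1) = some T' ∧ TrigEquiv T T')
    (i : ℕ) : D'.facts i ⊆ D.replay G (f i) := by
  induction i with
  | zero =>
    rw [D'.facts_zero]
    exact replay_mono (Nat.zero_le (f 0))
  | succ i ih =>
    refine Set.Subset.trans ?_ (replay_mono (hf i.lt_succ_self))
    cases hT : D'.tr (i + 1) with
    | none => exact D'.step_none i hT ▸ ih.trans (replay_mono (f i).le_succ)
    | some T =>
      obtain ⟨T', hT', he⟩ := htr i T hT
      obtain ⟨-, hhom, hfacts⟩ := D'.step_some i T hT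
      rw [hfacts, (replays_of_trigEquiv hT' he ⟨hhom.1, hhom.2.trans ih⟩).2]
      exact Set.union_subset_union_left _ ih

lemma isSubderivation_restrict {D' : ChaseDerivation 𝓡 G} (h : IsSubderivation D' D) :
    IsSubderivation D' (D.restrict G) := by
  obtain ⟨f, hf, htr⟩ := h
  have hrep : ∀ i T, D'.tr (i + 1) = some T → D.Replays G (f i) := fun i T hT => by
    obtain ⟨T', hT', he⟩ := htr i T hT
    have hhom := (D'.step_some i T hT).2.1
    exact (replays_of_trigEquiv hT' he ⟨hhom.1, hhom.2.trans (facts_subset_replay hf htr i)⟩).1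
  refine isSubderivation_of_trigEquiv _ (fun i => count (D.Replays G) (f i)) (fun n h => ?_)
    fun i T hT => ?_
  · obtain ⟨T, hT⟩ := Option.ne_none_iff_exists'.1 (D'.closed n h)
    exact count_strict_mono (hrep n T hT) (hf n.lt_succ_self)
  · obtain ⟨T', hT', he⟩ := htr i T hT
    exact ⟨T', (restrictTr_count (hrep i T hT)).trans hT', he⟩

variable (D G)

theorem isRestriction_restrict : IsRestriction D G (D.restrict G) :=
  ⟨D.restrict_isSubderivation G, fun _ => isSubderivation_restrict⟩

end ChaseDerivation

theorem O_chase_hereditary_general (𝓡 : Set XRule) (F : Set XAtom)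
    (D : ChaseDerivation 𝓡 F) (F' : Set XAtom) :
    (∃ D' : ChaseDerivation 𝓡 F', IsRestriction D F' D') ∧
    ∀ D' : ChaseDerivation 𝓡 F', IsRestriction D F' D' → OChase D' :=
  ⟨⟨D.restrict F', D.isRestriction_restrict F'⟩, fun _ _ => trivial⟩

/-- the O-chase is hereditary. -/
theorem O_chase_hereditary (𝓡 : Set XRule) (F : Set XAtom) (hF : F.Finite)
    (D : ChaseDerivation 𝓡 F) (hD : OChase D) (F' : Set XAtom) (hsub : F' ⊆ F) :
    (∃ D' : ChaseDerivation 𝓡 F', IsRestriction D F' D') ∧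
    ∀ D' : ChaseDerivation 𝓡 F', IsRestriction D F' D' → OChase D' :=
  O_chase_hereditary_general 𝓡 F D F'
end

section
/- The SO-chase is hereditary: for every SO-chase derivation D from a factbase F and a ruleset 𝓡 and every F′ ⊆ F, the restriction D|F′ of D induced by F′ is an SO-chase derivation from F′ and 𝓡. -/
open Chase

section Hered

open Classical

variable {𝓡 : Set XRule} {F : Set XAtom}

lemma frontier_mem_body {R : XRule} {t : XTerm} (h : t ∈ R.frontier) :
    t ∈ R.body.flatMap XAtom.args := by
  obtain ⟨⟨_, a, ha, hta⟩, _⟩ := h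
  exact List.mem_flatMap.2 ⟨a, ha, hta⟩

lemma isVar_or_const (t : XTerm) : t.isVar ∨ ∃ c, t = XTerm.const c := by
  cases t with
  | const c => exact Or.inr ⟨c, rfl⟩
  | var v => exact Or.inl trivial
  | null a b c d => exact Or.inl trivial

lemma applySet_body_congr {R : XRule} {π π' : XTerm → XTerm}
    (h : ∀ t ∈ R.body.flatMap XAtom.args, π t = π' t) :
    applySet π R.bodySet = applySet π' R.bodySet := by
  unfold applySet
  apply Set.image_congr
  intro a ha
  unfold applyAtom
  congr 1
  apply List.map_congr_left
  intro t ht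
  exact h t (List.mem_flatMap.2 ⟨a, ha, ht⟩)

lemma trigKey_congr {R : XRule} {π π' : XTerm → XTerm}
    (h : ∀ t ∈ R.body.flatMap XAtom.args, π t = π' t) :
    trigKey R π = trigKey R π' := by
  unfold trigKey
  apply List.map_congr_left
  intro t ht
  rw [h t ht]

lemma safeExt_head_congr {R : XRule} {π π' : XTerm → XTerm}
    (hπ : constPreserving π) (hπ' : constPreserving π')
    (h : ∀ t ∈ R.body.flatMap XAtom.args, π t = π' t) :
    applySet (safeExt R π) R.headSet = applySet (safeExt R π') R.headSet := by
  unfold applySet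
  apply Set.image_congr
  intro a ha
  unfold applyAtom
  congr 1
  apply List.map_congr_left
  intro t ht
  unfold safeExt
  by_cases hev : t ∈ R.existVars
  · rw [if_pos hev, if_pos hev, trigKey_congr h]
  · rw [if_neg hev, if_neg hev]
    rcases isVar_or_const t with hv | ⟨c, rfl⟩
    · have hh : t ∈ listVars R.head := ⟨hv, a, ha, ht⟩
      have hb : t ∈ listVars R.body := by
        by_contra hb
        exact hev ⟨hh, hb⟩
      obtain ⟨_, b, hbmem, htb⟩ := hb
      exact h t (List.mem_flatMap.2 ⟨b, hbmem, htb⟩)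
    · rw [hπ c, hπ' c]

end Hered

open Classical

noncomputable def gfacts (D : ChaseDerivation 𝓡 F) (F' : Set XAtom) : ℕ → Set XAtom
  | 0 => F'
  | n+1 => match D.tr (n+1) with
    | some T => if isHom T.π T.rule.bodySet (gfacts D F' n)
        then gfacts D F' n ∪ applySet (safeExt T.rule T.π) T.rule.headSet
        else gfacts D F' n
    | none => gfacts D F' n

def keptIdx (D : ChaseDerivation 𝓡 F) (F' : Set XAtom) (n : ℕ) : Prop :=
  ∃ T, D.tr (n+1) = some T ∧ isHom T.π T.rule.bodySet (gfacts D F' n)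

lemma gfacts_succ_of_kept {D : ChaseDerivation 𝓡 F} {F' : Set XAtom} {n : ℕ} {T : Trigger}
    (hT : D.tr (n+1) = some T) (hh : isHom T.π T.rule.bodySet (gfacts D F' n)) :
    gfacts D F' (n+1) = gfacts D F' n ∪ applySet (safeExt T.rule T.π) T.rule.headSet := by
  rw [gfacts, hT]
  simp [hh]

lemma gfacts_succ_not_kept {D : ChaseDerivation 𝓡 F} {F' : Set XAtom} {n : ℕ}
    (hk : ¬ keptIdx D F' n) : gfacts D F' (n+1) = gfacts D F' n := by
  rw [gfacts]
  cases h : D.tr (n+1) with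
  | none => rfl
  | some T =>
    have : ¬ isHom T.π T.rule.bodySet (gfacts D F' n) := fun hh => hk ⟨T, h, hh⟩
    simp [this]

lemma gfacts_subset_succ (D : ChaseDerivation 𝓡 F) (F' : Set XAtom) (n : ℕ) :
    gfacts D F' n ⊆ gfacts D F' (n+1) := by
  rw [gfacts]
  cases h : D.tr (n+1) with
  | none => exact subset_rfl
  | some T =>
    by_cases hh : isHom T.π T.rule.bodySet (gfacts D F' n)
    · simp only [hh, if_true]
      exact Set.subset_union_left
    · simp [hh]

lemma gfacts_mono {D : ChaseDerivation 𝓡 F} {F' : Set XAtom} {a b : ℕ} (h : a ≤ b) :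
    gfacts D F' a ⊆ gfacts D F' b := by
  induction b with
  | zero => cases Nat.le_zero.1 h; exact subset_rfl
  | succ k ih =>
    rcases Nat.lt_succ_iff_lt_or_eq.1 (Nat.lt_succ_of_le h) with h' | h'
    · exact (ih (Nat.lt_succ_iff.1 h')).trans (gfacts_subset_succ D F' k)
    · exact h' ▸ subset_rfl

lemma gfacts_const {D : ChaseDerivation 𝓡 F} {F' : Set XAtom} {a b : ℕ} (h : a ≤ b)
    (hk : ∀ k, a ≤ k → k < b → ¬ keptIdx D F' k) : gfacts D F' b = gfacts D F' a := by
  induction b, h using Nat.le_induction with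
  | base => rfl
  | succ k hak ih =>
    rw [gfacts_succ_not_kept (hk k hak (Nat.lt_succ_self k))]
    exact ih fun j hja hjk => hk j hja (Nat.lt_succ_of_lt hjk)

noncomputable def enm (D : ChaseDerivation 𝓡 F) (F' : Set XAtom) : ℕ → Option ℕ
  | 0 => if h : ∃ n, keptIdx D F' n then some (Nat.find h) else none
  | i+1 => match enm D F' i with
    | some m => if h : ∃ n, m < n ∧ keptIdx D F' n then some (Nat.find h) else none
    | none => none

lemma enm_zero_spec {D : ChaseDerivation 𝓡 F} {F' : Set XAtom} {m : ℕ}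
    (h : enm D F' 0 = some m) : keptIdx D F' m ∧ ∀ k < m, ¬ keptIdx D F' k := by
  by_cases hex : ∃ n, keptIdx D F' n
  · rw [enm, dif_pos hex] at h
    obtain rfl : Nat.find hex = m := Option.some_injective _ h
    exact ⟨Nat.find_spec hex, fun k hk => Nat.find_min hex hk⟩
  · rw [enm, dif_neg hex] at h
    exact absurd h (by simp)

lemma enm_succ_none {D : ChaseDerivation 𝓡 F} {F' : Set XAtom} {i : ℕ}
    (h : enm D F' i = none) : enm D F' (i+1) = none := by
  rw [enm, h]

lemma enm_succ_eq {D : ChaseDerivation 𝓡 F} {F' : Set XAtom} {i m : ℕ}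
    (h : enm D F' i = some m) :
    enm D F' (i+1) = if h : ∃ n, m < n ∧ keptIdx D F' n then some (Nat.find h) else none := by
  rw [enm, h]

lemma enm_succ_spec {D : ChaseDerivation 𝓡 F} {F' : Set XAtom} {i m' : ℕ}
    (h : enm D F' (i+1) = some m') :
    ∃ m, enm D F' i = some m ∧ m < m' ∧ keptIdx D F' m' ∧
      ∀ k, m < k → k < m' → ¬ keptIdx D F' k := by
  cases he : enm D F' i with
  | none => rw [enm_succ_none he] at h; exact absurd h (by simp)
  | some m =>
    rw [enm_succ_eq he] at h
    by_cases hex : ∃ n, m < n ∧ keptIdx D F' n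
    · rw [dif_pos hex] at h
      obtain rfl : Nat.find hex = m' := Option.some_injective _ h
      refine ⟨m, rfl, (Nat.find_spec hex).1, (Nat.find_spec hex).2, ?_⟩
      intro k hmk hkm hk
      exact Nat.find_min hex hkm ⟨hmk, hk⟩
    · rw [dif_neg hex] at h
      exact absurd h (by simp)

lemma enm_kept {D : ChaseDerivation 𝓡 F} {F' : Set XAtom} {i m : ℕ}
    (h : enm D F' i = some m) : keptIdx D F' m := by
  cases i with
  | zero => exact (enm_zero_spec h).1
  | succ k =>
    obtain ⟨_, _, _, hk, _⟩ := enm_succ_spec h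
    exact hk

lemma enm_strict {D : ChaseDerivation 𝓡 F} {F' : Set XAtom} :
    ∀ {j i m'}, i < j → enm D F' j = some m' → ∃ m, enm D F' i = some m ∧ m < m'
  | 0, i, m', h, _ => absurd h (Nat.not_lt_zero i)
  | k+1, i, m', hij, hj => by
    obtain ⟨m₀, hk, hlt, -, -⟩ := enm_succ_spec hj
    rcases Nat.lt_succ_iff_lt_or_eq.1 hij with h | h
    · obtain ⟨m, hi, hm⟩ := enm_strict h hk
      exact ⟨m, hi, hm.trans hlt⟩
    · exact ⟨m₀, h ▸ hk, hlt⟩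

lemma enm_order {D : ChaseDerivation 𝓡 F} {F' : Set XAtom} {j j' m m' : ℕ}
    (hj : enm D F' j = some m) (hj' : enm D F' j' = some m') (h : m < m') : j < j' := by
  by_contra hle
  push_neg at hle
  rcases Nat.lt_or_ge j' j with hlt | hge
  · obtain ⟨m₀, h₀, hm₀⟩ := enm_strict hlt hj
    rw [hj'] at h₀
    obtain rfl : m' = m₀ := Option.some_injective _ h₀
    omega
  · have : j = j' := le_antisymm hge hle
    subst this
    rw [hj] at hj'
    obtain rfl : m = m' := Option.some_injective _ hj'
    omega

lemma enm_surj {D : ChaseDerivation 𝓡 F} {F' : Set XAtom} :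
    ∀ m, keptIdx D F' m → ∃ j, enm D F' j = some m := by
  intro m
  induction m using Nat.strong_induction_on with
  | _ m ih =>
    intro hm
    by_cases hp : ∃ n, n < m ∧ keptIdx D F' n
    · obtain ⟨n₀, hn₀m, hn₀⟩ := hp
      have hm1 : 1 ≤ m := Nat.one_le_iff_ne_zero.2 (by omega)
      set m' := Nat.findGreatest (fun n => keptIdx D F' n) (m-1) with hm'def
      have hn₀le : n₀ ≤ m - 1 := by omega
      have hle : n₀ ≤ m' := Nat.le_findGreatest hn₀le hn₀
      have hkm' : keptIdx D F' m' := Nat.findGreatest_spec hn₀le hn₀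
      have hm'lt : m' < m := by
        have := Nat.findGreatest_le (P := fun n => keptIdx D F' n) (m-1)
        omega
      have hmax : ∀ k, m' < k → k < m → ¬ keptIdx D F' k := by
        intro k hk1 hk2 hk
        have : k ≤ m' := Nat.le_findGreatest (by omega) hk
        omega
      obtain ⟨j, hj⟩ := ih m' hm'lt hkm'
      have h2 : ∃ n, m' < n ∧ keptIdx D F' n := ⟨m, hm'lt, hm⟩
      refine ⟨j+1, ?_⟩
      rw [enm_succ_eq hj, dif_pos h2]
      congr 1
      refine le_antisymm (Nat.find_le ⟨hm'lt, hm⟩) ?_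
      by_contra hlt
      push_neg at hlt
      have hspec := Nat.find_spec h2
      exact hmax _ hspec.1 hlt hspec.2
    · have h0 : ∃ n, keptIdx D F' n := ⟨m, hm⟩
      have hfe : Nat.find h0 = m := by
        refine le_antisymm (Nat.find_le hm) ?_
        by_contra hlt
        push_neg at hlt
        exact hp ⟨Nat.find h0, hlt, Nat.find_spec h0⟩
      exact ⟨0, by rw [enm, dif_pos h0, hfe]⟩

noncomputable def rtrg (D : ChaseDerivation 𝓡 F) (F' : Set XAtom) : ℕ → Option Trigger
  | 0 => none
  | i+1 => match enm D F' i with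
    | some m => D.tr (m+1)
    | none => none

noncomputable def rfct (D : ChaseDerivation 𝓡 F) (F' : Set XAtom) : ℕ → Set XAtom
  | 0 => F'
  | i+1 => match enm D F' i with
    | some m => gfacts D F' (m+1)
    | none => rfct D F' i

lemma rtrg_some {D : ChaseDerivation 𝓡 F} {F' : Set XAtom} {i m : ℕ}
    (h : enm D F' i = some m) : rtrg D F' (i+1) = D.tr (m+1) := by
  rw [rtrg, h]

lemma rtrg_none {D : ChaseDerivation 𝓡 F} {F' : Set XAtom} {i : ℕ}
    (h : enm D F' i = none) : rtrg D F' (i+1) = none := by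
  rw [rtrg, h]

lemma rfct_some {D : ChaseDerivation 𝓡 F} {F' : Set XAtom} {i m : ℕ}
    (h : enm D F' i = some m) : rfct D F' (i+1) = gfacts D F' (m+1) := by
  rw [rfct, h]

lemma rfct_none {D : ChaseDerivation 𝓡 F} {F' : Set XAtom} {i : ℕ}
    (h : enm D F' i = none) : rfct D F' (i+1) = rfct D F' i := by
  rw [rfct, h]

lemma rfct_eq {D : ChaseDerivation 𝓡 F} {F' : Set XAtom} :
    ∀ {i m}, enm D F' i = some m → rfct D F' i = gfacts D F' m := by
  intro i m h
  cases i with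
  | zero =>
    obtain ⟨hk, hmin⟩ := enm_zero_spec h
    have : gfacts D F' m = gfacts D F' 0 :=
      gfacts_const (Nat.zero_le m) (fun k _ hk2 => hmin k hk2)
    rw [this]; rfl
  | succ j =>
    obtain ⟨m₀, hj, hlt, _, hgap⟩ := enm_succ_spec h
    rw [rfct_some hj]
    exact (gfacts_const hlt (fun k hk1 hk2 => hgap k hk1 hk2)).symm

noncomputable def restrictD (D : ChaseDerivation 𝓡 F) (F' : Set XAtom) :
    ChaseDerivation 𝓡 F' where
  tr := rtrg D F'
  facts := rfct D F'
  tr_zero := rfl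
  facts_zero := rfl
  step_some := by
    intro i T hT
    cases he : enm D F' i with
    | none => rw [rtrg_none he] at hT; exact absurd hT (by simp)
    | some m =>
      rw [rtrg_some he] at hT
      obtain ⟨T₀, hT₀, hhom₀⟩ := enm_kept he
      have hTT : T₀ = T := by rw [hT₀] at hT; exact Option.some_injective _ hT
      rw [hTT] at hhom₀
      refine ⟨(D.step_some m T hT).1, ?_, ?_⟩
      · rw [rfct_eq he]; exact hhom₀
      · rw [rfct_some he, rfct_eq he]
        exact gfacts_succ_of_kept hT hhom₀
  step_none := by
    intro i h
    cases he : enm D F' i with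
    | none => exact rfct_none he
    | some m =>
      obtain ⟨T₀, hT₀, _⟩ := enm_kept he
      rw [rtrg_some he, hT₀] at h
      exact absurd h (by simp)
  closed := by
    intro i h
    cases he : enm D F' (i+1) with
    | none => rw [rtrg_none he] at h; exact absurd rfl h
    | some m =>
      obtain ⟨m₀, hm₀, _⟩ := enm_succ_spec he
      obtain ⟨T₀, hT₀, _⟩ := enm_kept hm₀
      rw [rtrg_some hm₀, hT₀]
      simp
  distinct := by
    intro i j T T' hi hj hij
    cases i with
    | zero => rw [rtrg] at hi; exact absurd hi (by simp)
    | succ a =>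
      cases j with
      | zero => rw [rtrg] at hj; exact absurd hj (by simp)
      | succ b =>
        cases hea : enm D F' a with
        | none => rw [rtrg_none hea] at hi; exact absurd hi (by simp)
        | some m =>
          cases heb : enm D F' b with
          | none => rw [rtrg_none heb] at hj; exact absurd hj (by simp)
          | some m' =>
            rw [rtrg_some hea] at hi
            rw [rtrg_some heb] at hj
            have hab : a ≠ b := fun h => hij (by rw [h])
            have hmm : m ≠ m' := by
              intro h
              subst h
              rcases Nat.lt_or_ge a b with h' | h'
              · obtain ⟨k, hk, hkm⟩ := enm_strict h' heb
                rw [hea] at hk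
                have := Option.some_injective _ hk
                omega
              · have h'' : b < a := by omega
                obtain ⟨k, hk, hkm⟩ := enm_strict h'' hea
                rw [heb] at hk
                have := Option.some_injective _ hk
                omega
            exact D.distinct (m+1) (m'+1) T T' hi hj (by omega)

lemma TrigEquiv.refl' (T : Trigger) : TrigEquiv T T := ⟨rfl, fun _ _ => rfl⟩

lemma restrict_sub (D : ChaseDerivation 𝓡 F) (F' : Set XAtom) :
    IsSubderivation (restrictD D F') D := by
  classical
  refine ⟨fun i => Nat.rec ((enm D F' 0).getD 0)
    (fun k ih => match enm D F' (k+1) with | some m => m | none => ih + 1) i, ?_, ?_⟩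
  all_goals
    have hφeq : ∀ i m, enm D F' i = some m →
        (Nat.rec ((enm D F' 0).getD 0)
          (fun k ih => match enm D F' (k+1) with | some m => m | none => ih + 1) i : ℕ) = m := by
      intro i m h
      cases i with
      | zero => show (enm D F' 0).getD 0 = m; rw [h]; rfl
      | succ k =>
        show (match enm D F' (k+1) with | some m => m | none => _ + 1) = m
        rw [h]
  · apply strictMono_nat_of_lt_succ
    intro k
    cases h : enm D F' (k+1) with
    | some m =>
      obtain ⟨m₀, hk, hlt, -, -⟩ := enm_succ_spec h
      simp only [hφeq k m₀ hk, h]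
      exact hlt
    | none =>
      show (Nat.rec _ _ k : ℕ) < (match enm D F' (k+1) with | some m => m | none => _ + 1)
      rw [h]
      exact Nat.lt_succ_self _
  · intro i T hT
    cases he : enm D F' i with
    | none =>
      rw [show (restrictD D F').tr (i+1) = rtrg D F' (i+1) from rfl, rtrg_none he] at hT
      exact absurd hT (by simp)
    | some m =>
      rw [show (restrictD D F').tr (i+1) = rtrg D F' (i+1) from rfl, rtrg_some he] at hT
      refine ⟨T, ?_, TrigEquiv.refl' T⟩
      simp only [hφeq i m he]
      exact hT

lemma restrict_max (D : ChaseDerivation 𝓡 F) (F' : Set XAtom)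
    (D'' : ChaseDerivation 𝓡 F') (hs : IsSubderivation D'' D) :
    IsSubderivation D'' (restrictD D F') := by
  classical
  obtain ⟨φ'', hmono, hprop⟩ := hs
  have hple : ∀ i, (match i with | 0 => 0 | k+1 => φ'' k + 1) ≤ φ'' i := by
    intro i
    cases i with
    | zero => exact Nat.zero_le _
    | succ k => exact Nat.succ_le_of_lt (hmono (Nat.lt_succ_self k))
  have hpmono : ∀ i, (match i with | 0 => 0 | k+1 => φ'' k + 1) ≤
      (match i+1 with | 0 => 0 | k+1 => φ'' k + 1) := by
    intro i
    show _ ≤ φ'' i + 1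
    exact (hple i).trans (Nat.le_succ _)
  have key : ∀ i, D''.facts i ⊆ gfacts D F' (match i with | 0 => 0 | k+1 => φ'' k + 1) := by
    intro i
    induction i with
    | zero => rw [D''.facts_zero]; exact subset_rfl
    | succ k ih =>
      cases hT : D''.tr (k+1) with
      | none =>
        rw [D''.step_none k hT]
        exact ih.trans (gfacts_mono (hpmono k))
      | some T =>
        obtain ⟨hR, hhom, hfe⟩ := D''.step_some k T hT
        obtain ⟨T', hT', hTe⟩ := hprop k T hT
        obtain ⟨hR', hhom', _⟩ := D.step_some (φ'' k) T' hT'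
        have hkhom : isHom T'.π T'.rule.bodySet (gfacts D F' (φ'' k)) := by
          refine ⟨hhom'.1, ?_⟩
          have hbs : applySet T'.π T'.rule.bodySet = applySet T.π T.rule.bodySet := by
            rw [← hTe.1]
            exact applySet_body_congr (fun t ht => (hTe.2 t ht).symm)
          rw [hbs]
          exact hhom.2.trans (ih.trans (gfacts_mono (hple k)))
        have hG : gfacts D F' (φ'' k + 1) =
            gfacts D F' (φ'' k) ∪ applySet (safeExt T'.rule T'.π) T'.rule.headSet :=
          gfacts_succ_of_kept hT' hkhom
        have hhead : applySet (safeExt T.rule T.π) T.rule.headSet =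
            applySet (safeExt T'.rule T'.π) T'.rule.headSet := by
          rw [← hTe.1]
          exact safeExt_head_congr hhom.1 hhom'.1 hTe.2
        show D''.facts (k+1) ⊆ gfacts D F' (φ'' k + 1)
        rw [hfe, hG, hhead]
        exact Set.union_subset_union (ih.trans (gfacts_mono (hple k))) subset_rfl
  have hkept : ∀ i T, D''.tr (i+1) = some T → keptIdx D F' (φ'' i) := by
    intro i T hT
    obtain ⟨hR, hhom, hfe⟩ := D''.step_some i T hT
    obtain ⟨T', hT', hTe⟩ := hprop i T hT
    obtain ⟨hR', hhom', _⟩ := D.step_some (φ'' i) T' hT'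
    refine ⟨T', hT', hhom'.1, ?_⟩
    have hbs : applySet T'.π T'.rule.bodySet = applySet T.π T.rule.bodySet := by
      rw [← hTe.1]
      exact applySet_body_congr (fun t ht => (hTe.2 t ht).symm)
    rw [hbs]
    exact hhom.2.trans ((key i).trans (gfacts_mono (hple i)))
  have hex : ∀ i T, D''.tr (i+1) = some T → ∃ j, enm D F' j = some (φ'' i) :=
    fun i T h => enm_surj _ (hkept i T h)
  set ψ : ℕ → ℕ := fun i => Nat.rec
    (if h : ∃ j, enm D F' j = some (φ'' 0) then Nat.find h else 0)
    (fun k ih => if h : (∃ T, D''.tr (k+2) = some T) ∧ (∃ j, enm D F' j = some (φ'' (k+1)))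
      then Nat.find h.2 else ih + 1) i with hψdef
  have hψ0 : ψ 0 = if h : ∃ j, enm D F' j = some (φ'' 0) then Nat.find h else 0 := rfl
  have hψs : ∀ k, ψ (k+1) =
      if h : (∃ T, D''.tr (k+2) = some T) ∧ (∃ j, enm D F' j = some (φ'' (k+1)))
      then Nat.find h.2 else ψ k + 1 := fun k => rfl
  have hψe : ∀ i T, D''.tr (i+1) = some T → enm D F' (ψ i) = some (φ'' i) := by
    intro i T hT
    cases i with
    | zero =>
      have h := hex 0 T hT
      rw [hψ0, dif_pos h]
      exact Nat.find_spec h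
    | succ k =>
      have hc : (∃ T, D''.tr (k+2) = some T) ∧ (∃ j, enm D F' j = some (φ'' (k+1))) :=
        ⟨⟨T, hT⟩, hex (k+1) T hT⟩
      rw [hψs k, dif_pos hc]
      exact Nat.find_spec hc.2
  refine ⟨ψ, ?_, ?_⟩
  · apply strictMono_nat_of_lt_succ
    intro k
    rw [hψs k]
    by_cases hc : (∃ T, D''.tr (k+2) = some T) ∧ (∃ j, enm D F' j = some (φ'' (k+1)))
    · rw [dif_pos hc]
      obtain ⟨T2, hT2⟩ := hc.1
      have hT1 : ∃ T, D''.tr (k+1) = some T := by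
        have hne := D''.closed k (by rw [hT2]; simp)
        cases h1 : D''.tr (k+1) with
        | none => exact absurd h1 hne
        | some T1 => exact ⟨T1, rfl⟩
      obtain ⟨T1, hT1⟩ := hT1
      exact enm_order (hψe k T1 hT1) (Nat.find_spec hc.2) (hmono (Nat.lt_succ_self k))
    · rw [dif_neg hc]
      exact Nat.lt_succ_self _
  · intro i T hT
    obtain ⟨T', hT', hTe⟩ := hprop i T hT
    refine ⟨T', ?_, hTe⟩
    show rtrg D F' (ψ i + 1) = some T'
    rw [rtrg_some (hψe i T hT)]
    exact hT'

lemma sub_SOChase {D : ChaseDerivation 𝓡 F} (hD : SOChase D) {F' : Set XAtom}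
    {D' : ChaseDerivation 𝓡 F'} (hs : IsSubderivation D' D) : SOChase D' := by
  obtain ⟨φ, hφ, hprop⟩ := hs
  intro i T hT
  obtain ⟨hR, hhom, _⟩ := D'.step_some i T hT
  refine ⟨⟨hR, hhom⟩, ?_⟩
  rintro j T'' hji hj ⟨hrule, hfa⟩
  cases j with
  | zero => rw [D'.tr_zero] at hj; exact absurd hj (by simp)
  | succ k =>
    obtain ⟨S, hS, hSe⟩ := hprop i T hT
    obtain ⟨S'', hS'', hS''e⟩ := hprop k T'' hj
    have hk : φ k < φ i := hφ (by omega)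
    have hSO := hD (φ i) S hS
    refine hSO.2 (φ k + 1) S'' (by omega) hS'' ⟨(hS''e.1.symm.trans hrule).trans hSe.1, ?_⟩
    intro t ht
    have htT : t ∈ T.rule.frontier := by rw [hSe.1]; exact ht
    have htb : t ∈ T.rule.body.flatMap XAtom.args := frontier_mem_body htT
    have h1 : T.π t = S.π t := hSe.2 t htb
    have h2 : T.π t = T''.π t := hfa t htT
    have htb'' : t ∈ T''.rule.body.flatMap XAtom.args := by rw [hrule]; exact htb
    have h3 : T''.π t = S''.π t := hS''e.2 t htb''
    exact (h1.symm.trans h2).trans h3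

/-- the SO-chase is hereditary. -/
theorem SO_chase_hereditary (𝓡 : Set XRule) (F : Set XAtom) (hF : F.Finite)
    (D : ChaseDerivation 𝓡 F) (hD : SOChase D) (F' : Set XAtom) (hsub : F' ⊆ F) :
    (∃ D' : ChaseDerivation 𝓡 F', IsRestriction D F' D') ∧
    ∀ D' : ChaseDerivation 𝓡 F', IsRestriction D F' D' → SOChase D' := by
  constructor
  · exact ⟨restrictD D F', restrict_sub D F', fun D'' hs => restrict_max D F' D'' hs⟩
  · intro D' hres
    exact sub_SOChase hD hres.1
end

section
/- The R-chase is hereditary: for every R-chase derivation D from a factbase F and a ruleset 𝓡 and every F′ ⊆ F, the restriction D|F′ of D induced by F′ is an R-chase derivation from F′ and 𝓡. -/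
open Chase


namespace Hered

open Chase

variable {𝓡 : Set XRule} {F : Set XAtom}

/-- the atoms produced by a trigger -/
noncomputable def tprod (T : Trigger) : Set XAtom := applySet (safeExt T.rule T.π) T.rule.headSet

lemma Dfacts_succ_sub (D : ChaseDerivation 𝓡 F) (i : ℕ) : D.facts i ⊆ D.facts (i+1) := by
  cases h : D.tr (i+1) with
  | none => rw [D.step_none i h]
  | some T => rw [(D.step_some i T h).2.2]; exact Set.subset_union_left

lemma Dfacts_mono (D : ChaseDerivation 𝓡 F) : ∀ {i j : ℕ}, i ≤ j → D.facts i ⊆ D.facts j := by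
  intro i j h
  induction h with
  | refl => exact subset_rfl
  | step h ih => exact ih.trans (Dfacts_succ_sub D _)

lemma mem_flatMap_of_mem_listVars {l : List XAtom} {t : XTerm} (h : t ∈ listVars l) :
    t ∈ l.flatMap XAtom.args := by
  obtain ⟨-, a, ha, hta⟩ := h
  exact List.mem_flatMap.mpr ⟨a, ha, hta⟩

lemma applyAtom_congr {σ σ' : XTerm → XTerm} {a : XAtom} (h : ∀ t ∈ a.args, σ t = σ' t) :
    applyAtom σ a = applyAtom σ' a := by
  unfold applyAtom
  congr 1
  exact List.map_congr_left h

lemma trigEquiv_refl (T : Trigger) : TrigEquiv T T := ⟨rfl, fun _ _ => rfl⟩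

lemma applySet_body_congr {T T' : Trigger} (hE : TrigEquiv T T') :
    applySet T.π T.rule.bodySet = applySet T'.π T'.rule.bodySet := by
  obtain ⟨hr, hπ⟩ := hE
  rw [← hr]
  apply Set.image_congr
  intro a ha
  exact applyAtom_congr (fun t ht => hπ t (List.mem_flatMap.mpr ⟨a, ha, ht⟩))

lemma isHom_congr {T T' : Trigger} (hE : TrigEquiv T T') (hc : constPreserving T'.π)
    {X : Set XAtom} (h : isHom T.π T.rule.bodySet X) : isHom T'.π T'.rule.bodySet X :=
  ⟨hc, by rw [← applySet_body_congr hE]; exact h.2⟩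

lemma trigKey_congr {T T' : Trigger} (hE : TrigEquiv T T') :
    trigKey T.rule T.π = trigKey T'.rule T'.π := by
  obtain ⟨hr, hπ⟩ := hE
  rw [← hr]
  exact List.map_congr_left (fun t ht => by rw [hπ t ht])

lemma eq_const_of_not_isVar {t : XTerm} (h : ¬ t.isVar) : ∃ c, t = XTerm.const c := by
  cases t with
  | const c => exact ⟨c, rfl⟩
  | var n => exact absurd trivial h
  | null a b c d => exact absurd trivial h

lemma tprod_congr {T T' : Trigger} (hE : TrigEquiv T T')
    (hc : constPreserving T.π) (hc' : constPreserving T'.π) : tprod T = tprod T' := by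
  have hr := hE.1
  unfold tprod applySet
  rw [← hr]
  apply Set.image_congr
  intro a ha
  apply applyAtom_congr
  intro t ht
  unfold safeExt
  by_cases hex : t ∈ T.rule.existVars
  · rw [if_pos hex, if_pos hex, trigKey_congr hE, hE.1]
  · rw [if_neg hex, if_neg hex]
    by_cases hv : t.isVar
    · have hhead : t ∈ listVars T.rule.head := ⟨hv, a, ha, ht⟩
      have hbody : t ∈ listVars T.rule.body := by
        by_contra hb
        exact hex ⟨hhead, hb⟩
      exact hE.2 t (mem_flatMap_of_mem_listVars hbody)
    · obtain ⟨c, rfl⟩ := eq_const_of_not_isVar hv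
      rw [hc c, hc' c]

open Classical in
/-- the greedy factbases of the restriction, indexed by positions of `D` -/
noncomputable def gfacts (D : ChaseDerivation 𝓡 F) (F' : Set XAtom) : ℕ → Set XAtom
  | 0 => F'
  | k+1 => match D.tr (k+1) with
    | some T => if isHom T.π T.rule.bodySet (gfacts D F' k) then gfacts D F' k ∪ tprod T
        else gfacts D F' k
    | none => gfacts D F' k

/-- the `k`-th trigger of `D` fires on the greedy restriction -/
def incl (D : ChaseDerivation 𝓡 F) (F' : Set XAtom) (k : ℕ) : Prop :=
  ∃ T, D.tr (k+1) = some T ∧ isHom T.π T.rule.bodySet (gfacts D F' k)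

open Classical in
lemma gfacts_succ (D : ChaseDerivation 𝓡 F) (F' : Set XAtom) (k : ℕ) :
    gfacts D F' (k+1) = match D.tr (k+1) with
      | some T => if isHom T.π T.rule.bodySet (gfacts D F' k) then gfacts D F' k ∪ tprod T
          else gfacts D F' k
      | none => gfacts D F' k := rfl

lemma gfacts_none (D : ChaseDerivation 𝓡 F) (F' : Set XAtom) {k : ℕ}
    (h : D.tr (k+1) = none) : gfacts D F' (k+1) = gfacts D F' k := by
  rw [gfacts_succ, h]

open Classical in
lemma gfacts_some (D : ChaseDerivation 𝓡 F) (F' : Set XAtom) {k : ℕ} {T : Trigger}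
    (h : D.tr (k+1) = some T) :
    gfacts D F' (k+1) = if isHom T.π T.rule.bodySet (gfacts D F' k)
      then gfacts D F' k ∪ tprod T else gfacts D F' k := by
  rw [gfacts_succ, h]

lemma gfacts_succ_sub (D : ChaseDerivation 𝓡 F) (F' : Set XAtom) (k : ℕ) :
    gfacts D F' k ⊆ gfacts D F' (k+1) := by
  rcases h : D.tr (k+1) with _ | T
  · rw [gfacts_none D F' h]
  · rw [gfacts_some D F' h]
    split
    · exact Set.subset_union_left
    · exact subset_rfl

lemma gfacts_mono (D : ChaseDerivation 𝓡 F) (F' : Set XAtom) :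
    ∀ {i j : ℕ}, i ≤ j → gfacts D F' i ⊆ gfacts D F' j := by
  intro i j h
  induction h with
  | refl => exact subset_rfl
  | step h ih => exact ih.trans (gfacts_succ_sub D F' _)

lemma gfacts_of_not_incl (D : ChaseDerivation 𝓡 F) (F' : Set XAtom) {k : ℕ}
    (h : ¬ incl D F' k) : gfacts D F' (k+1) = gfacts D F' k := by
  rcases htr : D.tr (k+1) with _ | T
  · exact gfacts_none D F' htr
  · rw [gfacts_some D F' htr, if_neg (fun hh => h ⟨T, htr, hh⟩)]

lemma gfacts_of_incl (D : ChaseDerivation 𝓡 F) (F' : Set XAtom) {k : ℕ}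
    (h : incl D F' k) :
    ∃ T, D.tr (k+1) = some T ∧ isHom T.π T.rule.bodySet (gfacts D F' k) ∧
      gfacts D F' (k+1) = gfacts D F' k ∪ tprod T := by
  obtain ⟨T, htr, hh⟩ := h
  exact ⟨T, htr, hh, by rw [gfacts_some D F' htr, if_pos hh]⟩

lemma gfacts_const (D : ChaseDerivation 𝓡 F) (F' : Set XAtom) :
    ∀ {k k' : ℕ}, k ≤ k' → (∀ j, k ≤ j → j < k' → ¬ incl D F' j) →
      gfacts D F' k' = gfacts D F' k := by
  intro k k' h
  induction h with
  | refl => intro _; rfl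
  | @step m h ih =>
    intro hno
    rw [gfacts_of_not_incl D F' (hno m h (Nat.lt_succ_self m)),
      ih (fun j h1 h2 => hno j h1 (Nat.lt_succ_of_lt h2))]

lemma gfacts_sub_facts (D : ChaseDerivation 𝓡 F) {F' : Set XAtom} (hsub : F' ⊆ F) :
    ∀ k, gfacts D F' k ⊆ D.facts k := by
  intro k
  induction k with
  | zero => rw [D.facts_zero]; exact hsub
  | succ k ih =>
    rcases htr : D.tr (k+1) with _ | T
    · rw [gfacts_none D F' htr, D.step_none k htr]; exact ih
    · rw [gfacts_some D F' htr, (D.step_some k T htr).2.2]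
      split
      · exact Set.union_subset_union_left _ ih
      · exact ih.trans Set.subset_union_left

open Classical in
/-- enumeration of the positions of `D` whose trigger fires on the restriction -/
noncomputable def pidx (D : ChaseDerivation 𝓡 F) (F' : Set XAtom) : ℕ → Option ℕ
  | 0 => if h : ∃ k, incl D F' k then some (Nat.find h) else none
  | i+1 => match pidx D F' i with
    | some k => if h : ∃ k', k < k' ∧ incl D F' k' then some (Nat.find h) else none
    | none => none

open Classical in
lemma pidx_zero (D : ChaseDerivation 𝓡 F) (F' : Set XAtom) :
    pidx D F' 0 = if h : ∃ k, incl D F' k then some (Nat.find h) else none := rfl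

open Classical in
lemma pidx_succ (D : ChaseDerivation 𝓡 F) (F' : Set XAtom) (i : ℕ) :
    pidx D F' (i+1) = match pidx D F' i with
      | some k => if h : ∃ k', k < k' ∧ incl D F' k' then some (Nat.find h) else none
      | none => none := rfl

lemma pidx_zero_some (D : ChaseDerivation 𝓡 F) (F' : Set XAtom) {k : ℕ}
    (h : pidx D F' 0 = some k) : incl D F' k ∧ ∀ j, j < k → ¬ incl D F' j := by
  classical
  rw [pidx_zero] at h
  split at h
  · rename_i hex
    obtain rfl := Option.some.inj h
    exact ⟨Nat.find_spec hex, fun j hj => Nat.find_min hex hj⟩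
  · exact absurd h (by simp)

lemma pidx_none_succ (D : ChaseDerivation 𝓡 F) (F' : Set XAtom) {i : ℕ}
    (h : pidx D F' i = none) : pidx D F' (i+1) = none := by
  rw [pidx_succ, h]

open Classical in
lemma pidx_succ_of_some (D : ChaseDerivation 𝓡 F) (F' : Set XAtom) {i k : ℕ}
    (hp : pidx D F' i = some k) :
    pidx D F' (i+1) = if h : ∃ k', k < k' ∧ incl D F' k' then some (Nat.find h)
      else none := by
  rw [pidx_succ, hp]

lemma pidx_succ_some (D : ChaseDerivation 𝓡 F) (F' : Set XAtom) {i k' : ℕ}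
    (h : pidx D F' (i+1) = some k') :
    ∃ k, pidx D F' i = some k ∧ k < k' ∧ incl D F' k' ∧
      ∀ j, k < j → j < k' → ¬ incl D F' j := by
  classical
  rcases hp : pidx D F' i with _ | k
  · rw [pidx_none_succ D F' hp] at h; exact absurd h (by simp)
  · rw [pidx_succ_of_some D F' hp] at h
    split at h
    · rename_i hex
      obtain rfl := Option.some.inj h
      refine ⟨k, rfl, (Nat.find_spec hex).1, (Nat.find_spec hex).2, ?_⟩
      intro j h1 h2 hj
      exact Nat.find_min hex h2 ⟨h1, hj⟩
    · exact absurd h (by simp)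

lemma pidx_incl (D : ChaseDerivation 𝓡 F) (F' : Set XAtom) :
    ∀ {i k : ℕ}, pidx D F' i = some k → incl D F' k := by
  intro i k h
  cases i with
  | zero => exact (pidx_zero_some D F' h).1
  | succ i =>
    obtain ⟨k0, -, -, hk, -⟩ := pidx_succ_some D F' h
    exact hk

lemma pidx_lt (D : ChaseDerivation 𝓡 F) (F' : Set XAtom) :
    ∀ {j i k k' : ℕ}, i < j → pidx D F' i = some k → pidx D F' j = some k' → k < k' := by
  intro j
  induction j with
  | zero => intro i k k' h; exact absurd h (Nat.not_lt_zero i)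
  | succ j ih =>
    intro i k k' hij hi hj
    obtain ⟨k0, hp, hlt, -, -⟩ := pidx_succ_some D F' hj
    rcases Nat.lt_succ_iff_lt_or_eq.mp hij with h | rfl
    · exact (ih h hi hp).trans hlt
    · rw [hi] at hp
      obtain rfl := Option.some.inj hp
      exact hlt

lemma pidx_inj (D : ChaseDerivation 𝓡 F) (F' : Set XAtom) {i j k : ℕ}
    (hi : pidx D F' i = some k) (hj : pidx D F' j = some k) : i = j := by
  rcases Nat.lt_trichotomy i j with h | h | h
  · exact absurd (pidx_lt D F' h hi hj) (lt_irrefl k)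
  · exact h
  · exact absurd (pidx_lt D F' h hj hi) (lt_irrefl k)

lemma pidx_index_lt (D : ChaseDerivation 𝓡 F) (F' : Set XAtom) {i j k k' : ℕ}
    (hi : pidx D F' i = some k) (hj : pidx D F' j = some k') (h : k < k') : i < j := by
  rcases Nat.lt_trichotomy i j with hh | hh | hh
  · exact hh
  · subst hh; rw [hi] at hj; obtain rfl := Option.some.inj hj; exact absurd h (lt_irrefl k)
  · exact absurd ((pidx_lt D F' hh hj hi).trans h) (lt_irrefl k')

lemma pidx_surj (D : ChaseDerivation 𝓡 F) (F' : Set XAtom) :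
    ∀ k, incl D F' k → ∃ i, pidx D F' i = some k := by
  intro k
  induction k using Nat.strong_induction_on with
  | _ k ih =>
    intro hk
    classical
    by_cases hprev : ∃ j, j < k ∧ incl D F' j
    · obtain ⟨j0, hj0k, hj0⟩ := hprev
      have hk0 : 0 < k := Nat.lt_of_le_of_lt (Nat.zero_le j0) hj0k
      set m := Nat.findGreatest (incl D F') (k-1) with hm
      have hmP : incl D F' m := Nat.findGreatest_spec (m := j0) (by omega) hj0
      have hmax : ∀ j, m < j → j < k → ¬ incl D F' j := fun j h1 h2 =>
        Nat.findGreatest_is_greatest h1 (by omega)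
      have hmk : m < k := Nat.lt_of_le_of_lt (Nat.findGreatest_le _) (by omega)
      obtain ⟨i, hi⟩ := ih m hmk hmP
      refine ⟨i+1, ?_⟩
      have hex : ∃ k', m < k' ∧ incl D F' k' := ⟨k, hmk, hk⟩
      rw [pidx_succ_of_some D F' hi, dif_pos hex]
      congr 1
      have h1 : Nat.find hex ≤ k := Nat.find_min' hex ⟨hmk, hk⟩
      have h2 := Nat.find_spec hex
      rcases Nat.lt_or_ge (Nat.find hex) k with h3 | h3
      · exact absurd h2.2 (hmax _ h2.1 h3)
      · omega
    · refine ⟨0, ?_⟩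
      rw [pidx_zero]
      have hex : ∃ k, incl D F' k := ⟨k, hk⟩
      rw [dif_pos hex]
      congr 1
      have h1 : Nat.find hex ≤ k := Nat.find_min' hex hk
      rcases Nat.lt_or_ge (Nat.find hex) k with h2 | h2
      · exact absurd ⟨Nat.find hex, h2, Nat.find_spec hex⟩ hprev
      · exact Nat.le_antisymm h1 h2

/-! ### The greedy restriction as a chase derivation -/

noncomputable def resTr (D : ChaseDerivation 𝓡 F) (F' : Set XAtom) : ℕ → Option Trigger
  | 0 => none
  | i+1 => match pidx D F' i with
    | some k => D.tr (k+1)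
    | none => none

noncomputable def resFacts (D : ChaseDerivation 𝓡 F) (F' : Set XAtom) : ℕ → Set XAtom
  | 0 => F'
  | i+1 => match pidx D F' i with
    | some k => gfacts D F' (k+1)
    | none => resFacts D F' i

lemma resTr_succ (D : ChaseDerivation 𝓡 F) (F' : Set XAtom) (i : ℕ) :
    resTr D F' (i+1) = match pidx D F' i with
      | some k => D.tr (k+1)
      | none => none := rfl

lemma resFacts_succ (D : ChaseDerivation 𝓡 F) (F' : Set XAtom) (i : ℕ) :
    resFacts D F' (i+1) = match pidx D F' i with
      | some k => gfacts D F' (k+1)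
      | none => resFacts D F' i := rfl

lemma resTr_of_some (D : ChaseDerivation 𝓡 F) (F' : Set XAtom) {i k : ℕ}
    (hp : pidx D F' i = some k) : resTr D F' (i+1) = D.tr (k+1) := by
  rw [resTr_succ, hp]

lemma resTr_of_none (D : ChaseDerivation 𝓡 F) (F' : Set XAtom) {i : ℕ}
    (hp : pidx D F' i = none) : resTr D F' (i+1) = none := by
  rw [resTr_succ, hp]

lemma resFacts_of_some (D : ChaseDerivation 𝓡 F) (F' : Set XAtom) {i k : ℕ}
    (hp : pidx D F' i = some k) : resFacts D F' (i+1) = gfacts D F' (k+1) := by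
  rw [resFacts_succ, hp]

lemma resFacts_of_none (D : ChaseDerivation 𝓡 F) (F' : Set XAtom) {i : ℕ}
    (hp : pidx D F' i = none) : resFacts D F' (i+1) = resFacts D F' i := by
  rw [resFacts_succ, hp]

lemma resTr_some (D : ChaseDerivation 𝓡 F) (F' : Set XAtom) {i : ℕ} {T : Trigger}
    (h : resTr D F' (i+1) = some T) :
    ∃ k, pidx D F' i = some k ∧ D.tr (k+1) = some T := by
  rcases hp : pidx D F' i with _ | k
  · rw [resTr_of_none D F' hp] at h; exact absurd h (by simp)
  · rw [resTr_of_some D F' hp] at h; exact ⟨k, rfl, h⟩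

lemma resFacts_eq (D : ChaseDerivation 𝓡 F) (F' : Set XAtom) :
    ∀ {i k : ℕ}, pidx D F' i = some k → resFacts D F' i = gfacts D F' k := by
  intro i k hp
  cases i with
  | zero =>
    obtain ⟨-, hmin⟩ := pidx_zero_some D F' hp
    exact (gfacts_const D F' (Nat.zero_le k) (fun j _ hj => hmin j hj)).symm
  | succ i =>
    obtain ⟨k0, hp0, hlt, -, hno⟩ := pidx_succ_some D F' hp
    rw [resFacts_of_some D F' hp0]
    exact (gfacts_const D F' (Nat.succ_le_of_lt hlt)
      (fun j h1 h2 => hno j (Nat.lt_of_succ_le h1) h2)).symm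

noncomputable def resD (D : ChaseDerivation 𝓡 F) (F' : Set XAtom) :
    ChaseDerivation 𝓡 F' where
  tr := resTr D F'
  facts := resFacts D F'
  tr_zero := rfl
  facts_zero := rfl
  step_some := by
    intro i T h
    obtain ⟨k, hp, htr⟩ := resTr_some D F' h
    have hincl : incl D F' k := pidx_incl D F' hp
    obtain ⟨T', htr', hhom, hg⟩ := gfacts_of_incl D F' hincl
    rw [htr] at htr'
    obtain rfl := Option.some.inj htr'
    have hfi : resFacts D F' i = gfacts D F' k := resFacts_eq D F' hp
    refine ⟨(D.step_some k T htr).1, ?_, ?_⟩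
    · rw [hfi]; exact hhom
    · rw [resFacts_of_some D F' hp, hg, ← hfi]
      rfl
  step_none := by
    intro i h
    have hp : pidx D F' i = none := by
      rcases hq : pidx D F' i with _ | k
      · rfl
      · obtain ⟨T, htr, -⟩ := pidx_incl D F' hq
        rw [resTr_of_some D F' hq, htr] at h
        exact absurd h (by simp)
    exact resFacts_of_none D F' hp
  closed := by
    intro i h
    rcases hq : pidx D F' (i+1) with _ | k'
    · exact absurd (resTr_of_none D F' hq) h
    · obtain ⟨k, hp, -, -, -⟩ := pidx_succ_some D F' hq
      obtain ⟨T, htr, -⟩ := pidx_incl D F' hp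
      rw [resTr_of_some D F' hp, htr]
      simp
  distinct := by
    intro i j T T' hi hj hne
    cases i with
    | zero => exact absurd hi (by simp [resTr])
    | succ i =>
      cases j with
      | zero => exact absurd hj (by simp [resTr])
      | succ j =>
        obtain ⟨k, hp, htr⟩ := resTr_some D F' hi
        obtain ⟨k', hp', htr'⟩ := resTr_some D F' hj
        have hkk : k + 1 ≠ k' + 1 := by
          intro hh
          have hk : k = k' := by omega
          subst hk
          exact hne (by rw [pidx_inj D F' hp hp'])
        exact D.distinct (k+1) (k'+1) T T' htr htr' hkk

noncomputable def resφ (D : ChaseDerivation 𝓡 F) (F' : Set XAtom) : ℕ → ℕ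
  | 0 => (pidx D F' 0).getD 0
  | i+1 => match pidx D F' (i+1) with
    | some k => k
    | none => resφ D F' i + 1

lemma resφ_succ (D : ChaseDerivation 𝓡 F) (F' : Set XAtom) (i : ℕ) :
    resφ D F' (i+1) = match pidx D F' (i+1) with
      | some k => k
      | none => resφ D F' i + 1 := rfl

lemma resφ_eq (D : ChaseDerivation 𝓡 F) (F' : Set XAtom) {i k : ℕ}
    (hp : pidx D F' i = some k) : resφ D F' i = k := by
  cases i with
  | zero => show (pidx D F' 0).getD 0 = k; rw [hp]; rfl
  | succ i => rw [resφ_succ, hp]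

lemma resφ_strictMono (D : ChaseDerivation 𝓡 F) (F' : Set XAtom) :
    StrictMono (resφ D F') := by
  apply strictMono_nat_of_lt_succ
  intro i
  rcases hp : pidx D F' (i+1) with _ | k'
  · rw [resφ_succ, hp]
    exact Nat.lt_succ_self _
  · obtain ⟨k, hp0, hlt, -, -⟩ := pidx_succ_some D F' hp
    rw [resφ_eq D F' hp0, resφ_eq D F' hp]
    exact hlt

lemma resD_subderivation (D : ChaseDerivation 𝓡 F) (F' : Set XAtom) :
    IsSubderivation (resD D F') D := by
  refine ⟨resφ D F', resφ_strictMono D F', ?_⟩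
  intro i T h
  obtain ⟨k, hp, htr⟩ := resTr_some D F' h
  exact ⟨T, by rw [resφ_eq D F' hp]; exact htr, trigEquiv_refl T⟩

open Classical in
noncomputable def idxOf (D : ChaseDerivation 𝓡 F) (F' : Set XAtom) (k : ℕ) : ℕ :=
  if h : ∃ i, pidx D F' i = some k then Nat.find h else 0

lemma pidx_idxOf (D : ChaseDerivation 𝓡 F) (F' : Set XAtom) {k : ℕ}
    (hk : incl D F' k) : pidx D F' (idxOf D F' k) = some k := by
  classical
  have he := pidx_surj D F' k hk
  unfold idxOf
  rw [dif_pos he]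
  exact Nat.find_spec he

lemma key_step (D : ChaseDerivation 𝓡 F) (F' : Set XAtom)
    (D'' : ChaseDerivation 𝓡 F') {i : ℕ} {T T' : Trigger} {m : ℕ}
    (hfi : D''.facts i ⊆ gfacts D F' m)
    (hT : D''.tr (i+1) = some T) (hT' : D.tr (m+1) = some T') (hE : TrigEquiv T T') :
    incl D F' m ∧ D''.facts (i+1) ⊆ gfacts D F' (m+1) := by
  have hs := D''.step_some i T hT
  have hs' := D.step_some m T' hT'
  have hhomT : isHom T.π T.rule.bodySet (gfacts D F' m) := ⟨hs.2.1.1, hs.2.1.2.trans hfi⟩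
  have hhomT' : isHom T'.π T'.rule.bodySet (gfacts D F' m) := isHom_congr hE hs'.2.1.1 hhomT
  have hincl : incl D F' m := ⟨T', hT', hhomT'⟩
  refine ⟨hincl, ?_⟩
  have hg : gfacts D F' (m+1) = gfacts D F' m ∪ tprod T' := by
    rw [gfacts_some D F' hT', if_pos hhomT']
  rw [hs.2.2, hg]
  exact Set.union_subset_union hfi (tprod_congr hE hs.2.1.1 hs'.2.1.1).subset

lemma resD_max (D : ChaseDerivation 𝓡 F) (F' : Set XAtom)
    (D'' : ChaseDerivation 𝓡 F') (h : IsSubderivation D'' D) :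
    IsSubderivation D'' (resD D F') := by
  classical
  obtain ⟨ψ, hψ, hψtr⟩ := h
  have hψsucc : ∀ i, ψ i + 1 ≤ ψ (i+1) := fun i => Nat.succ_le_of_lt (hψ (Nat.lt_succ_self i))
  have hfacts : ∀ i, D''.facts i ⊆ gfacts D F' (ψ i) := by
    intro i
    induction i with
    | zero =>
      rw [D''.facts_zero]
      exact gfacts_mono D F' (Nat.zero_le _)
    | succ i ih =>
      rcases htr : D''.tr (i+1) with _ | T
      · rw [D''.step_none i htr]
        exact ih.trans (gfacts_mono D F' (hψ (Nat.lt_succ_self i)).le)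
      · obtain ⟨T', htr', hE⟩ := hψtr i T htr
        exact ((key_step D F' D'' ih htr htr' hE).2).trans (gfacts_mono D F' (hψsucc i))
  have hincl : ∀ i T, D''.tr (i+1) = some T → incl D F' (ψ i) ∧
      ∃ T', D.tr (ψ i + 1) = some T' ∧ TrigEquiv T T' := by
    intro i T htr
    obtain ⟨T', htr', hE⟩ := hψtr i T htr
    exact ⟨(key_step D F' D'' (hfacts i) htr htr' hE).1, T', htr', hE⟩
  let χ : ℕ → ℕ := fun n => Nat.rec
    (if (D''.tr 1).isSome then idxOf D F' (ψ 0) else 0)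
    (fun i prev => if (D''.tr (i+2)).isSome then idxOf D F' (ψ (i+1)) else prev + 1) n
  have hχs : ∀ i, χ (i+1) = if (D''.tr (i+2)).isSome then idxOf D F' (ψ (i+1))
      else χ i + 1 := fun i => rfl
  have hχ_eq : ∀ i T, D''.tr (i+1) = some T → χ i = idxOf D F' (ψ i) := by
    intro i T htr
    cases i with
    | zero =>
      show (if (D''.tr 1).isSome then idxOf D F' (ψ 0) else 0) = _
      rw [if_pos (by rw [htr]; rfl)]
    | succ i =>
      rw [hχs i]
      rw [if_pos (by rw [htr]; rfl)]
  have hpχ : ∀ i T, D''.tr (i+1) = some T → pidx D F' (χ i) = some (ψ i) := by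
    intro i T htr
    rw [hχ_eq i T htr]
    exact pidx_idxOf D F' (hincl i T htr).1
  have hmono : StrictMono χ := by
    apply strictMono_nat_of_lt_succ
    intro i
    rcases htr2 : D''.tr (i+2) with _ | T2
    · rw [hχs i, htr2]
      simp only [Option.isSome_none, Bool.false_eq_true, if_false]
      omega
    · have h1 : D''.tr (i+1) ≠ none := D''.closed i (by rw [htr2]; simp)
      obtain ⟨T1, htr1⟩ := Option.ne_none_iff_exists'.mp h1
      rw [hχ_eq (i+1) T2 htr2, hχ_eq i T1 htr1]
      exact pidx_index_lt D F' (pidx_idxOf D F' (hincl i T1 htr1).1)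
        (pidx_idxOf D F' (hincl (i+1) T2 htr2).1) (hψ (Nat.lt_succ_self i))
  refine ⟨χ, hmono, ?_⟩
  intro i T htr
  obtain ⟨hinc, T', htr', hE⟩ := hincl i T htr
  refine ⟨T', ?_, hE⟩
  show resTr D F' (χ i + 1) = some T'
  rw [resTr_of_some D F' (hpχ i T htr)]
  exact htr'

lemma resD_isRestriction (D : ChaseDerivation 𝓡 F) (F' : Set XAtom) :
    IsRestriction D F' (resD D F') :=
  ⟨resD_subderivation D F', fun D'' h => resD_max D F' D'' h⟩

lemma rchase_of_sub {F' : Set XAtom} (D : ChaseDerivation 𝓡 F) (hsub : F' ⊆ F)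
    (hD : RChase D) (D' : ChaseDerivation 𝓡 F') (h : IsSubderivation D' D) :
    RChase D' := by
  obtain ⟨φ, hφ, hφtr⟩ := h
  have hfacts : ∀ i, D'.facts i ⊆ D.facts (φ i) := by
    intro i
    induction i with
    | zero =>
      rw [D'.facts_zero]
      have h0 : F' ⊆ D.facts 0 := by rw [D.facts_zero]; exact hsub
      exact h0.trans (Dfacts_mono D (Nat.zero_le _))
    | succ i ih =>
      have hsub2 : D.facts (φ i + 1) ⊆ D.facts (φ (i+1)) :=
        Dfacts_mono D (Nat.succ_le_of_lt (hφ (Nat.lt_succ_self i)))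
      rcases htr : D'.tr (i+1) with _ | T
      · rw [D'.step_none i htr]
        exact ih.trans (Dfacts_mono D (hφ (Nat.lt_succ_self i)).le)
      · obtain ⟨T', htr', hE⟩ := hφtr i T htr
        have hs := D'.step_some i T htr
        have hs' := D.step_some (φ i) T' htr'
        rw [hs.2.2]
        apply Set.union_subset
        · exact (ih.trans (Dfacts_succ_sub D (φ i))).trans hsub2
        · have heq : tprod T = tprod T' := tprod_congr hE hs.2.1.1 hs'.2.1.1
          have h2 : tprod T' ⊆ D.facts (φ i + 1) := by
            rw [hs'.2.2]; exact Set.subset_union_right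
          exact (heq.subset.trans h2).trans hsub2
  intro i T htr
  have hs := D'.step_some i T htr
  refine ⟨⟨hs.1, hs.2.1⟩, ?_⟩
  rintro ⟨σ, hσhom, hσagree⟩
  obtain ⟨T', htr', hE⟩ := hφtr i T htr
  have happ := hD (φ i) T' htr'
  apply happ.2
  refine ⟨σ, ?_, ?_⟩
  · rw [← hE.1]
    exact ⟨hσhom.1, hσhom.2.trans (hfacts i)⟩
  · intro t ht
    rw [← hE.1] at ht
    rw [hσagree t ht]
    exact hE.2 t (mem_flatMap_of_mem_listVars ht)

end Hered

open Hered

/-- the R-chase is hereditary. -/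
theorem R_chase_hereditary (𝓡 : Set XRule) (F : Set XAtom) (hF : F.Finite)
    (D : ChaseDerivation 𝓡 F) (hD : RChase D) (F' : Set XAtom) (hsub : F' ⊆ F) :
    (∃ D' : ChaseDerivation 𝓡 F', IsRestriction D F' D') ∧
    ∀ D' : ChaseDerivation 𝓡 F', IsRestriction D F' D' → RChase D' := by
  constructor
  · exact ⟨resD D F', resD_isRestriction D F'⟩
  · intro D' hres
    exact rchase_of_sub D hsub hD D' hres.1
end

section
/- The E-chase is neither hereditary nor consistently hereditary: there exist a factbase F, a ruleset 𝓡, an E-chase derivation D from F and 𝓡, and a subset F′ ⊆ F such that the restriction D|F′ of D induced by F′ is not an E-chase derivation and is not a subderivation of any E-breadth-first E-chase derivation from F′ and 𝓡. -/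
open Chase

namespace CE

def a : XTerm := XTerm.const 0
def x : XTerm := XTerm.var 0

def pA : XAtom := ⟨0, [a]⟩
def sA : XAtom := ⟨1, [a]⟩
def mA : XAtom := ⟨2, [a]⟩
def qA : XAtom := ⟨3, [a]⟩
def tA : XAtom := ⟨4, [a]⟩

def pX : XAtom := ⟨0, [x]⟩
def sX : XAtom := ⟨1, [x]⟩
def mX : XAtom := ⟨2, [x]⟩
def qX : XAtom := ⟨3, [x]⟩
def tX : XAtom := ⟨4, [x]⟩

def RW : XRule := ⟨[pX], [sX, mX]⟩
def R1 : XRule := ⟨[sX], [qX]⟩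
def R2 : XRule := ⟨[pX], [tX]⟩

def RS : Set XRule := {RW, R1, R2}

def π0 : XTerm → XTerm := fun t => match t with
  | XTerm.var _ => a
  | u => u

def V : Trigger := ⟨RW, π0⟩
def Thi : Trigger := ⟨R1, π0⟩
def Tlo : Trigger := ⟨R2, π0⟩

def FB : Set XAtom := {pA, sA}
def FB' : Set XAtom := {pA}
def S1 : Set XAtom := {pA, sA, mA}
def S2 : Set XAtom := {pA, sA, mA, qA}
def S3 : Set XAtom := {pA, sA, mA, qA, tA}

def dtr : ℕ → Option Trigger
  | 0 => none
  | 1 => some V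
  | 2 => some Thi
  | 3 => some Tlo
  | _+4 => none

def dfacts : ℕ → Set XAtom
  | 0 => FB
  | 1 => S1
  | 2 => S2
  | _+3 => S3

def dfacts' : ℕ → Set XAtom
  | 0 => FB'
  | 1 => S1
  | 2 => S2
  | _+3 => S3

lemma x_isVar : XTerm.isVar x := by simp [x, XTerm.isVar]

lemma x_not_exist_RW : x ∉ RW.existVars := by
  intro h
  exact h.2 ⟨x_isVar, pX, by simp [RW], by simp [pX]⟩

lemma x_not_exist_R1 : x ∉ R1.existVars := by
  intro h
  exact h.2 ⟨x_isVar, sX, by simp [R1], by simp [sX]⟩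

lemma x_not_exist_R2 : x ∉ R2.existVars := by
  intro h
  exact h.2 ⟨x_isVar, pX, by simp [R2], by simp [pX]⟩

lemma safeExt_RW (π : XTerm → XTerm) : safeExt RW π x = π x := by
  unfold safeExt; exact if_neg x_not_exist_RW

lemma safeExt_R1 (π : XTerm → XTerm) : safeExt R1 π x = π x := by
  unfold safeExt; exact if_neg x_not_exist_R1

lemma safeExt_R2 (π : XTerm → XTerm) : safeExt R2 π x = π x := by
  unfold safeExt; exact if_neg x_not_exist_R2

lemma applyAtom_one (σ : XTerm → XTerm) (p : ℕ) (t : XTerm) :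
    applyAtom σ ⟨p, [t]⟩ = ⟨p, [σ t]⟩ := rfl

lemma RW_head : RW.head = [sX, mX] := rfl
lemma R1_head : R1.head = [qX] := rfl
lemma R2_head : R2.head = [tX] := rfl

lemma out_RW (π : XTerm → XTerm) (hx : π x = a) :
    applySet (safeExt RW π) RW.headSet = {sA, mA} := by
  have h1 : applyAtom (safeExt RW π) sX = sA := by
    rw [sX, applyAtom_one, safeExt_RW, hx]; rfl
  have h2 : applyAtom (safeExt RW π) mX = mA := by
    rw [mX, applyAtom_one, safeExt_RW, hx]; rfl
  ext A
  simp only [applySet, XRule.headSet, Set.mem_image, Set.mem_setOf_eq, RW_head,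
    List.mem_cons, List.mem_singleton, List.not_mem_nil, or_false,
    Set.mem_insert_iff, Set.mem_singleton_iff]
  constructor
  · rintro ⟨B, (rfl | rfl), rfl⟩
    · exact Or.inl h1
    · exact Or.inr h2
  · rintro (rfl | rfl)
    · exact ⟨sX, Or.inl rfl, h1⟩
    · exact ⟨mX, Or.inr rfl, h2⟩

lemma out_R1 (π : XTerm → XTerm) (hx : π x = a) :
    applySet (safeExt R1 π) R1.headSet = {qA} := by
  have h1 : applyAtom (safeExt R1 π) qX = qA := by
    rw [qX, applyAtom_one, safeExt_R1, hx]; rfl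
  ext A
  simp only [applySet, XRule.headSet, Set.mem_image, Set.mem_setOf_eq, R1_head,
    List.mem_singleton, Set.mem_singleton_iff]
  constructor
  · rintro ⟨B, rfl, rfl⟩; exact h1
  · rintro rfl; exact ⟨qX, rfl, h1⟩

lemma out_R2 (π : XTerm → XTerm) (hx : π x = a) :
    applySet (safeExt R2 π) R2.headSet = {tA} := by
  have h1 : applyAtom (safeExt R2 π) tX = tA := by
    rw [tX, applyAtom_one, safeExt_R2, hx]; rfl
  ext A
  simp only [applySet, XRule.headSet, Set.mem_image, Set.mem_setOf_eq, R2_head,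
    List.mem_singleton, Set.mem_singleton_iff]
  constructor
  · rintro ⟨B, rfl, rfl⟩; exact h1
  · rintro rfl; exact ⟨tX, rfl, h1⟩

lemma π0x : π0 x = a := rfl

lemma π0_constPreserving : constPreserving π0 := fun _ => rfl

lemma dtr_cases : ∀ k T, dtr k = some T →
    (k = 1 ∧ T = V) ∨ (k = 2 ∧ T = Thi) ∨ (k = 3 ∧ T = Tlo) := by
  intro k T h
  match k, h with
  | 1, h => exact Or.inl ⟨rfl, by simpa [dtr] using h.symm⟩
  | 2, h => exact Or.inr (Or.inl ⟨rfl, by simpa [dtr] using h.symm⟩)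
  | 3, h => exact Or.inr (Or.inr ⟨rfl, by simpa [dtr] using h.symm⟩)

lemma rules_ne_1 : RW ≠ R1 := by simp [RW, R1, pX, sX, mX, qX]
lemma rules_ne_2 : RW ≠ R2 := by simp [RW, R2, pX, sX, mX, tX]
lemma rules_ne_3 : R1 ≠ R2 := by simp [R1, R2, pX, sX, qX, tX]

lemma dtr_distinct : ∀ i j T T', dtr i = some T → dtr j = some T' → i ≠ j →
    ¬ TrigEquiv T T' := by
  intro i j T T' hT hT' hij hE
  rcases dtr_cases i T hT with ⟨hi, rfl⟩ | ⟨hi, rfl⟩ | ⟨hi, rfl⟩ <;>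
    rcases dtr_cases j T' hT' with ⟨hj, rfl⟩ | ⟨hj, rfl⟩ | ⟨hj, rfl⟩ <;>
      first
      | exact hij (hi.trans hj.symm)
      | exact rules_ne_1 hE.1
      | exact rules_ne_2 hE.1
      | exact rules_ne_3 hE.1
      | exact rules_ne_1 hE.1.symm
      | exact rules_ne_2 hE.1.symm
      | exact rules_ne_3 hE.1.symm

/-- the E-chase derivation `D` from `F = {p(a), s(a)}` -/
noncomputable def D : ChaseDerivation RS FB where
  tr := dtr
  facts := dfacts
  tr_zero := rfl
  facts_zero := rfl
  step_some := by
    intro i T hT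
    match i, hT with
    | 0, hT =>
      obtain rfl : V = T := by simpa [dtr] using hT
      refine ⟨by simp [RS, V], ⟨π0_constPreserving, ?_⟩, ?_⟩
      · intro A hA
        obtain ⟨B, hB, rfl⟩ := hA
        simp only [V, RW, XRule.bodySet, Set.mem_setOf_eq, List.mem_singleton] at hB
        subst hB
        show applyAtom π0 pX ∈ dfacts 0
        simp [pX, applyAtom_one, π0x, dfacts, FB, pA]
      · show dfacts 1 = dfacts 0 ∪ applySet (safeExt RW π0) RW.headSet
        rw [out_RW π0 π0x]
        ext A
        simp only [dfacts, S1, FB, Set.mem_insert_iff, Set.mem_singleton_iff,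
          Set.mem_union]
        tauto
    | 1, hT =>
      obtain rfl : Thi = T := by simpa [dtr] using hT
      refine ⟨by simp [RS, Thi], ⟨π0_constPreserving, ?_⟩, ?_⟩
      · intro A hA
        obtain ⟨B, hB, rfl⟩ := hA
        simp only [Thi, R1, XRule.bodySet, Set.mem_setOf_eq, List.mem_singleton] at hB
        subst hB
        show applyAtom π0 sX ∈ dfacts 1
        simp [sX, applyAtom_one, π0x, dfacts, S1, sA]
      · show dfacts 2 = dfacts 1 ∪ applySet (safeExt R1 π0) R1.headSet
        rw [out_R1 π0 π0x]
        ext A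
        simp only [dfacts, S2, S1, Set.mem_insert_iff, Set.mem_singleton_iff,
          Set.mem_union]
        tauto
    | 2, hT =>
      obtain rfl : Tlo = T := by simpa [dtr] using hT
      refine ⟨by simp [RS, Tlo], ⟨π0_constPreserving, ?_⟩, ?_⟩
      · intro A hA
        obtain ⟨B, hB, rfl⟩ := hA
        simp only [Tlo, R2, XRule.bodySet, Set.mem_setOf_eq, List.mem_singleton] at hB
        subst hB
        show applyAtom π0 pX ∈ dfacts 2
        simp [pX, applyAtom_one, π0x, dfacts, S2, pA]
      · show dfacts 3 = dfacts 2 ∪ applySet (safeExt R2 π0) R2.headSet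
        rw [out_R2 π0 π0x]
        ext A
        simp only [dfacts, S3, S2, Set.mem_insert_iff, Set.mem_singleton_iff,
          Set.mem_union]
        tauto
    | (n+3), hT => simp [dtr] at hT
  step_none := by
    intro i hT
    match i, hT with
    | (n+3), _ => rfl
  closed := by
    intro i h
    match i with
    | 0 => simp [dtr]
    | 1 => simp [dtr]
    | (n+2) => exact absurd rfl h
  distinct := dtr_distinct

/-- the restriction `D'` of `D` induced by `F' = {p(a)}` -/
noncomputable def D' : ChaseDerivation RS FB' where
  tr := dtr
  facts := dfacts'
  tr_zero := rfl
  facts_zero := rfl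
  step_some := by
    intro i T hT
    match i, hT with
    | 0, hT =>
      obtain rfl : V = T := by simpa [dtr] using hT
      refine ⟨by simp [RS, V], ⟨π0_constPreserving, ?_⟩, ?_⟩
      · intro A hA
        obtain ⟨B, hB, rfl⟩ := hA
        simp only [V, RW, XRule.bodySet, Set.mem_setOf_eq, List.mem_singleton] at hB
        subst hB
        show applyAtom π0 pX ∈ dfacts' 0
        simp [pX, applyAtom_one, π0x, dfacts', FB', pA]
      · show dfacts' 1 = dfacts' 0 ∪ applySet (safeExt RW π0) RW.headSet
        rw [out_RW π0 π0x]
        ext A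
        simp only [dfacts', S1, FB', Set.mem_insert_iff, Set.mem_singleton_iff,
          Set.mem_union]
    | 1, hT =>
      obtain rfl : Thi = T := by simpa [dtr] using hT
      refine ⟨by simp [RS, Thi], ⟨π0_constPreserving, ?_⟩, ?_⟩
      · intro A hA
        obtain ⟨B, hB, rfl⟩ := hA
        simp only [Thi, R1, XRule.bodySet, Set.mem_setOf_eq, List.mem_singleton] at hB
        subst hB
        show applyAtom π0 sX ∈ dfacts' 1
        simp [sX, applyAtom_one, π0x, dfacts', S1, sA]
      · show dfacts' 2 = dfacts' 1 ∪ applySet (safeExt R1 π0) R1.headSet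
        rw [out_R1 π0 π0x]
        ext A
        simp only [dfacts', S2, S1, Set.mem_insert_iff, Set.mem_singleton_iff,
          Set.mem_union]
        tauto
    | 2, hT =>
      obtain rfl : Tlo = T := by simpa [dtr] using hT
      refine ⟨by simp [RS, Tlo], ⟨π0_constPreserving, ?_⟩, ?_⟩
      · intro A hA
        obtain ⟨B, hB, rfl⟩ := hA
        simp only [Tlo, R2, XRule.bodySet, Set.mem_setOf_eq, List.mem_singleton] at hB
        subst hB
        show applyAtom π0 pX ∈ dfacts' 2
        simp [pX, applyAtom_one, π0x, dfacts', S2, pA]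
      · show dfacts' 3 = dfacts' 2 ∪ applySet (safeExt R2 π0) R2.headSet
        rw [out_R2 π0 π0x]
        ext A
        simp only [dfacts', S3, S2, Set.mem_insert_iff, Set.mem_singleton_iff,
          Set.mem_union]
        tauto
    | (n+3), hT => simp [dtr] at hT
  step_none := by
    intro i hT
    match i, hT with
    | (n+3), _ => rfl
  closed := by
    intro i h
    match i with
    | 0 => simp [dtr]
    | 1 => simp [dtr]
    | (n+2) => exact absurd rfl h
  distinct := dtr_distinct

/-! ## generic rank lemmas -/

section RankLemmas

variable {𝓡 : Set XRule} {G : Set XAtom}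

lemma rank_eq_rankStep (E : ChaseDerivation 𝓡 G) (A : XAtom) :
    rank E A = rankStep E (rankFuel E (firstProd E A)) A := rfl

lemma rank_facts0 (E : ChaseDerivation 𝓡 G) {A : XAtom} (h : A ∈ E.facts 0) :
    rank E A = 0 := by
  rw [rank_eq_rankStep]; unfold rankStep; rw [if_pos h]

lemma mem_facts_cases (E : ChaseDerivation 𝓡 G) :
    ∀ n A, A ∈ E.facts n → A ∈ E.facts 0 ∨ ∃ i, A ∈ producedAt E i := by
  intro n
  induction n with
  | zero => intro A h; exact Or.inl h
  | succ k ih =>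
    intro A h
    cases hT : E.tr (k+1) with
    | none => rw [E.step_none k hT] at h; exact ih A h
    | some T =>
      obtain ⟨-, -, hfe⟩ := E.step_some k T hT
      rw [hfe] at h
      rcases h with h | h
      · exact ih A h
      · exact Or.inr ⟨k+1, by simpa [producedAt, hT] using h⟩

lemma producedAt_none (E : ChaseDerivation 𝓡 G) {k : ℕ} (h : E.tr k = none) :
    producedAt E k = ∅ := by
  unfold producedAt; rw [h]

lemma rank_pos (E : ChaseDerivation 𝓡 G) {A : XAtom} {n : ℕ}
    (h0 : A ∉ E.facts 0) (hn : A ∈ E.facts n) : 1 ≤ rank E A := by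
  classical
  have hex : ∃ i, A ∈ producedAt E i := (mem_facts_cases E n A hn).resolve_left h0
  rw [rank_eq_rankStep]
  unfold rankStep
  rw [if_neg h0, dif_pos hex]
  split
  · exact Nat.le_add_right 1 _
  · next hnone =>
      exfalso
      have hspec := Nat.find_spec hex
      rw [producedAt_none E hnone] at hspec
      exact hspec

lemma trigRank_single (E : ChaseDerivation 𝓡 G) (T : Trigger) (p : ℕ)
    (hr : T.rule.body = [⟨p, [x]⟩]) :
    trigRank E T = 1 + rank E ⟨p, [T.π x]⟩ := by
  unfold trigRank listMax
  rw [hr]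
  simp [applyAtom_one]

lemma trigRank_rule_R2 (E : ChaseDerivation 𝓡 G) (T : Trigger)
    (hr : T.rule = R2) (hx : T.π x = a) (hp : pA ∈ E.facts 0) :
    trigRank E T = 1 := by
  rw [trigRank_single E T 0 (by rw [hr]; rfl), hx,
    show (⟨0, [a]⟩ : XAtom) = pA from rfl, rank_facts0 E hp]

lemma trigRank_rule_R1 (E : ChaseDerivation 𝓡 G) (T : Trigger) {n : ℕ}
    (hr : T.rule = R1) (hx : T.π x = a) (h0 : sA ∉ E.facts 0)
    (hn : sA ∈ E.facts n) : 2 ≤ trigRank E T := by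
  rw [trigRank_single E T 1 (by rw [hr]; rfl), hx,
    show (⟨1, [a]⟩ : XAtom) = sA from rfl]
  have := rank_pos E h0 hn
  omega

end RankLemmas

lemma trigEquiv_refl (T : Trigger) : TrigEquiv T T := ⟨rfl, fun _ _ => rfl⟩

lemma x_mem_Thi_body : x ∈ Thi.rule.body.flatMap XAtom.args := by
  simp [Thi, R1, sX]

lemma x_mem_Tlo_body : x ∈ Tlo.rule.body.flatMap XAtom.args := by
  simp [Tlo, R2, pX]

/-- the key impossibility: no rank-compatible derivation from `F'` contains an
occurrence of (an equivalent of) `Thi` before one of `Tlo` -/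
lemma not_both (E : ChaseDerivation RS FB') (i j : ℕ) (Th Tl : Trigger)
    (hThE : TrigEquiv Thi Th) (hTlE : TrigEquiv Tlo Tl)
    (hi : E.tr (i+1) = some Th) (hj : E.tr (j+1) = some Tl) (hij : i ≤ j)
    (hrc : RankCompatible E) : False := by
  have hxh : Th.π x = a := by rw [← hThE.2 x x_mem_Thi_body]; rfl
  have hxl : Tl.π x = a := by rw [← hTlE.2 x x_mem_Tlo_body]; rfl
  have hrh : Th.rule = R1 := hThE.1.symm
  have hrl : Tl.rule = R2 := hTlE.1.symm
  -- sA occurs in E.facts i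
  have hsmem : sA ∈ E.facts i := by
    obtain ⟨-, ⟨-, hhom⟩, -⟩ := E.step_some i Th hi
    have hb : sX ∈ Th.rule.bodySet := by
      rw [hrh]; simp [R1, XRule.bodySet]
    have := hhom (Set.mem_image_of_mem _ hb)
    simpa [sX, applyAtom_one, hxh, sA] using this
  have hs0 : sA ∉ E.facts 0 := by
    rw [E.facts_zero]
    simp [FB', sA, pA, a]
  have hp0 : pA ∈ E.facts 0 := by
    rw [E.facts_zero]; simp [FB']
  have h2 : 2 ≤ trigRank E Th := trigRank_rule_R1 E Th hrh hxh hs0 hsmem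
  have h1 : trigRank E Tl = 1 := trigRank_rule_R2 E Tl hrl hxl hp0
  have := hrc (i+1) (j+1) Th Tl hi hj (by omega)
  omega

/-! ## `D` is an E-chase derivation -/

lemma trigRank_D {k : ℕ} {T : Trigger} (h : dtr k = some T) : trigRank D T = 1 := by
  rcases dtr_cases k T h with ⟨-, rfl⟩ | ⟨-, rfl⟩ | ⟨-, rfl⟩
  · rw [trigRank_single D V 0 rfl, show V.π x = a from rfl,
      show (⟨0, [a]⟩ : XAtom) = pA from rfl,
      rank_facts0 D (show pA ∈ FB by simp [FB])]
  · rw [trigRank_single D Thi 1 rfl, show Thi.π x = a from rfl,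
      show (⟨1, [a]⟩ : XAtom) = sA from rfl,
      rank_facts0 D (show sA ∈ FB by simp [FB])]
  · rw [trigRank_single D Tlo 0 rfl, show Tlo.π x = a from rfl,
      show (⟨0, [a]⟩ : XAtom) = pA from rfl,
      rank_facts0 D (show pA ∈ FB by simp [FB])]

lemma rcomp_D : RankCompatible D := by
  intro i j T T' hT hT' _
  rw [trigRank_D hT, trigRank_D hT']

lemma applyAtom_id (A : XAtom) : applyAtom id A = A := by
  cases A; simp [applyAtom]

lemma applySet_id (S : Set XAtom) : applySet id S = S := by
  ext A
  simp [applySet, applyAtom_id]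

lemma logEquiv_union_of_subset {A B : Set XAtom} (h : B ⊆ A) : logEquiv (A ∪ B) A :=
  ⟨⟨id, fun _ => rfl, by rw [applySet_id]; exact Set.union_subset (fun _ h => h) h⟩,
   ⟨id, fun _ => rfl, by rw [applySet_id]; exact Set.subset_union_left⟩⟩

lemma no_AppE_D3 (T : Trigger) : ¬ AppE D 3 T := by
  rintro ⟨⟨hrule, hcp, hhom⟩, hneq⟩
  apply hneq
  have hfacts : D.facts 3 = S3 := rfl
  rcases (show T.rule = RW ∨ T.rule = R1 ∨ T.rule = R2 by simpa [RS] using hrule)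
    with h | h | h
  · have hb : pX ∈ T.rule.bodySet := by rw [h]; simp [RW, XRule.bodySet]
    have hm := hhom (Set.mem_image_of_mem _ hb)
    rw [hfacts] at hm
    have hx : T.π x = a := by
      have h2 : (⟨0, [T.π x]⟩ : XAtom) ∈ S3 := by simpa [pX, applyAtom_one] using hm
      simpa [S3, pA, sA, mA, qA, tA] using h2
    rw [h, out_RW T.π hx, hfacts]
    exact logEquiv_union_of_subset (by simp [S3, Set.insert_subset_iff,
      Set.singleton_subset_iff])
  · have hb : sX ∈ T.rule.bodySet := by rw [h]; simp [R1, XRule.bodySet]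
    have hm := hhom (Set.mem_image_of_mem _ hb)
    rw [hfacts] at hm
    have hx : T.π x = a := by
      have h2 : (⟨1, [T.π x]⟩ : XAtom) ∈ S3 := by simpa [sX, applyAtom_one] using hm
      simpa [S3, pA, sA, mA, qA, tA] using h2
    rw [h, out_R1 T.π hx, hfacts]
    exact logEquiv_union_of_subset (by simp [S3, Set.singleton_subset_iff])
  · have hb : pX ∈ T.rule.bodySet := by rw [h]; simp [R2, XRule.bodySet]
    have hm := hhom (Set.mem_image_of_mem _ hb)
    rw [hfacts] at hm
    have hx : T.π x = a := by
      have h2 : (⟨0, [T.π x]⟩ : XAtom) ∈ S3 := by simpa [pX, applyAtom_one] using hm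
      simpa [S3, pA, sA, mA, qA, tA] using h2
    rw [h, out_R2 T.π hx, hfacts]
    exact logEquiv_union_of_subset (by simp [S3, Set.singleton_subset_iff])

lemma rexh_D : RankExhaustive AppE D := by
  intro i T hi hlast T' hApp
  rcases dtr_cases i T hi with ⟨rfl, rfl⟩ | ⟨rfl, rfl⟩ | ⟨rfl, rfl⟩
  · exact absurd (by rw [trigRank_D (show dtr 2 = some Thi from rfl),
      trigRank_D (show dtr 1 = some V from rfl)])
      (hlast 2 Thi (by omega) rfl)
  · exact absurd (by rw [trigRank_D (show dtr 3 = some Tlo from rfl),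
      trigRank_D (show dtr 2 = some Thi from rfl)])
      (hlast 3 Tlo (by omega) rfl)
  · exact absurd hApp (no_AppE_D3 T')

lemma no_hom_of_missing {G H : Set XAtom} (p : ℕ)
    (hmem : (⟨p, [a]⟩ : XAtom) ∈ H) (hG : (⟨p, [a]⟩ : XAtom) ∉ G) :
    ¬ logEquiv H G := by
  rintro ⟨⟨σ, hcp, hsub⟩, -⟩
  have hm := hsub (Set.mem_image_of_mem _ hmem)
  have e : applyAtom σ ⟨p, [a]⟩ = ⟨p, [a]⟩ := by
    show (⟨p, [σ a]⟩ : XAtom) = ⟨p, [a]⟩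
    rw [show a = XTerm.const 0 from rfl, hcp 0]
  rw [e] at hm
  exact hG hm

lemma appE_D : ∀ i T, D.tr (i+1) = some T → AppE D i T := by
  intro i T hT
  rcases dtr_cases (i+1) T hT with ⟨h1, rfl⟩ | ⟨h1, rfl⟩ | ⟨h1, rfl⟩
  · obtain rfl : i = 0 := by omega
    refine ⟨⟨by simp [RS, V], π0_constPreserving, ?_⟩, ?_⟩
    · intro A hA; obtain ⟨B, hB, rfl⟩ := hA
      simp only [V, RW, XRule.bodySet, Set.mem_setOf_eq, List.mem_singleton] at hB
      subst hB
      show applyAtom π0 pX ∈ FB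
      simp [pX, applyAtom_one, π0x, FB, pA]
    · refine no_hom_of_missing 2 ?_ ?_
      · refine Set.mem_union_right _ ?_
        show mA ∈ applySet (safeExt RW π0) RW.headSet
        rw [out_RW π0 π0x]; simp
      · show mA ∉ FB
        simp [FB, mA, pA, sA]
  · obtain rfl : i = 1 := by omega
    refine ⟨⟨by simp [RS, Thi], π0_constPreserving, ?_⟩, ?_⟩
    · intro A hA; obtain ⟨B, hB, rfl⟩ := hA
      simp only [Thi, R1, XRule.bodySet, Set.mem_setOf_eq, List.mem_singleton] at hB
      subst hB
      show applyAtom π0 sX ∈ S1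
      simp [sX, applyAtom_one, π0x, S1, sA]
    · refine no_hom_of_missing 3 ?_ ?_
      · refine Set.mem_union_right _ ?_
        show qA ∈ applySet (safeExt R1 π0) R1.headSet
        rw [out_R1 π0 π0x]; simp
      · show qA ∉ S1
        simp [S1, qA, pA, sA, mA]
  · obtain rfl : i = 2 := by omega
    refine ⟨⟨by simp [RS, Tlo], π0_constPreserving, ?_⟩, ?_⟩
    · intro A hA; obtain ⟨B, hB, rfl⟩ := hA
      simp only [Tlo, R2, XRule.bodySet, Set.mem_setOf_eq, List.mem_singleton] at hB
      subst hB
      show applyAtom π0 pX ∈ S2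
      simp [pX, applyAtom_one, π0x, S2, pA]
    · refine no_hom_of_missing 4 ?_ ?_
      · refine Set.mem_union_right _ ?_
        show tA ∈ applySet (safeExt R2 π0) R2.headSet
        rw [out_R2 π0 π0x]; simp
      · show tA ∉ S2
        simp [S2, tA, pA, sA, mA, qA]

lemma echase_D : EChase D := ⟨⟨rcomp_D, rexh_D⟩, appE_D⟩

lemma not_echase_D' : ¬ EChase D' := fun h =>
  not_both D' 1 2 Thi Tlo (trigEquiv_refl Thi) (trigEquiv_refl Tlo) rfl rfl
    (by omega) h.1.1

lemma restr : IsRestriction D FB' D' := by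
  constructor
  · exact ⟨id, strictMono_id, fun i T h => ⟨T, h, trigEquiv_refl T⟩⟩
  · rintro D'' ⟨φ, hm, hmap⟩
    exact ⟨φ, hm, hmap⟩

end CE

/-- the E-chase is neither hereditary nor consistently hereditary:
there are a factbase `F`, a ruleset `𝓡`, an E-chase derivation `D` from `F` and
`𝓡`, and a subset `F' ⊆ F` such that the restriction of `D` induced by `F'` is not
an E-chase derivation and is not a subderivation of any E-breadth-first E-chase
derivation from `F'` and `𝓡`. -/
theorem E_chase_not_consistently_hereditary :
    ∃ (𝓡 : Set XRule) (F : Set XAtom), F.Finite ∧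
      ∃ D : ChaseDerivation 𝓡 F, EChase D ∧
        ∃ F' : Set XAtom, F' ⊆ F ∧
          ∃ D' : ChaseDerivation 𝓡 F', IsRestriction D F' D' ∧
            ¬ EChase D' ∧
            ¬ ∃ D'' : ChaseDerivation 𝓡 F', EChase D'' ∧ IsSubderivation D' D'' := by
  refine ⟨CE.RS, CE.FB, Set.Finite.insert CE.pA (Set.finite_singleton CE.sA),
    CE.D, CE.echase_D, CE.FB', ?_, CE.D', CE.restr, CE.not_echase_D', ?_⟩
  · intro A hA
    simp only [CE.FB', Set.mem_singleton_iff] at hA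
    subst hA
    simp [CE.FB]
  · rintro ⟨D'', hE, φ, hφ, hmap⟩
    obtain ⟨Th, h1, he1⟩ := hmap 1 CE.Thi rfl
    obtain ⟨Tl, h2, he2⟩ := hmap 2 CE.Tlo rfl
    refine CE.not_both D'' (φ 1) (φ 2) Th Tl he1 he2 h1 h2 ?_ hE.1.1
    have := hφ (show (1:ℕ) < 2 by omega)
    omega
end
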